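/- arXiv:2110.12135 — 9 statements merged into one kernel-verified Lean document; each statement's English description precedes it below -/
import Mathlib

section
/- Let A be a unital C*-algebra, let a ∈ A be positive (0 ≤ a), and let p ∈ A be a projection (p is self-adjoint and p² = p). Suppose there is v ∈ A such that ‖v* a v − p‖ < 1. Then there is w ∈ A such that w* a w = p. -/
/-!
Put `d = v⋆ a v` and `x = p d p + (1 - p)`. Since `1 - x = p (p - d) p` has norm `< 1`, `x` is
invertible; it is also positive and commutes with `p`, and `x p = p d p`, so `x` is an invertible
extension of the corner element `p d p`. For `c = (x⁻¹)^{1/2}`, which commutes with `p` as well,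
`c x c = 1`, hence `w = v p c` satisfies `w⋆ a w = c (p d p) c = c x c p = p`.
-/

open CFC Ring

theorem isUnit_mul_mul_add_one_sub {R : Type*} [NormedRing R] [HasSummableGeomSeries R]
    {p y : R} (hp : IsIdempotentElem p) (hp_norm : ‖p‖ ≤ 1) (hy : ‖y - p‖ < 1) :
    IsUnit (p * y * p + (1 - p)) := by
  have hsub : 1 - (p * y * p + (1 - p)) = p * (p - y) * p := by
    simp only [mul_sub, sub_mul, hp.eq]; abel
  have hsmall : ‖p * (p - y) * p‖ < 1 :=
    calc ‖p * (p - y) * p‖ ≤ ‖p‖ * ‖p - y‖ * ‖p‖ := norm_mul₃_le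
      _ ≤ 1 * ‖p - y‖ * 1 := by gcongr
      _ < 1 := by rwa [one_mul, mul_one, norm_sub_rev]
  rw [← sub_sub_self 1 (p * y * p + (1 - p)), hsub]
  exact (Units.oneSub _ hsmall).isUnit

theorem IsIdempotentElem.mul_mul_add_one_sub_mul {R : Type*} [Ring R] {p : R}
    (hp : IsIdempotentElem p) (y : R) : (p * y * p + (1 - p)) * p = p * y * p := by
  simp [add_mul, sub_mul, mul_assoc, hp.eq]

theorem IsIdempotentElem.commute_mul_mul_add_one_sub {R : Type*} [Ring R] {p : R}
    (hp : IsIdempotentElem p) (y : R) : Commute (p * y * p + (1 - p)) p := by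
  simp only [Commute, SemiconjBy, hp.mul_mul_add_one_sub_mul, mul_add, mul_sub, ← mul_assoc,
    hp.eq]
  simp

theorem IsStarProjection.mul_mul_add_one_sub_nonneg {R : Type*} [Ring R] [PartialOrder R]
    [StarRing R] [StarOrderedRing R] {p y : R} (hp : IsStarProjection p) (hy : 0 ≤ y) :
    0 ≤ p * y * p + (1 - p) := by
  refine add_nonneg ?_ hp.one_sub_nonneg
  simpa [hp.isSelfAdjoint.star_eq] using star_left_conjugate_nonneg hy p

theorem Commute.ringInverse_left {M : Type*} [MonoidWithZero M] {a b : M} (h : Commute a b) :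
    Commute a⁻¹ʳ b := by
  by_cases ha : IsUnit a
  · obtain ⟨u, rfl⟩ := ha
    simpa using h.units_inv_left
  · simp [Ring.inverse_non_unit a ha]

theorem IsStrictlyPositive.exists_star_mul_mul_mul_eq {A : Type*} [CStarAlgebra A]
    [PartialOrder A] [StarOrderedRing A] {x p : A} (hx : IsStrictlyPositive x) (hxp : Commute x p) :
    ∃ c, star c * (x * p) * c = p := by
  set c := CFC.sqrt x⁻¹ʳ
  have hcp : Commute c p := hxp.ringInverse_left.cfcₙ_nnreal NNReal.sqrt
  refine ⟨c, ?_⟩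
  calc star c * (x * p) * c = c * x * c * p := by
        rw [(sqrt_nonneg _).isSelfAdjoint.star_eq, mul_assoc, mul_assoc, mul_assoc, hcp.symm.eq]
        simp only [mul_assoc]
    _ = p := by rw [← conjSqrt_apply, conjSqrt_ringInverse_self x hx, one_mul]

/-- Let `A` be a unital C*-algebra, `a ∈ A` positive, and `p ∈ A` a projection.
If there is `v ∈ A` with `‖v* a v − p‖ < 1`, then there is `w ∈ A` with `w* a w = p`. -/
theorem exists_conj_eq_projection_of_norm_lt_one
    {A : Type*} [NormedRing A] [StarRing A] [CStarRing A] [CompleteSpace A]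
    [NormedAlgebra ℂ A] [StarModule ℂ A] [PartialOrder A] [StarOrderedRing A]
    (a : A) (ha : 0 ≤ a) (p : A) (hp_sa : IsSelfAdjoint p) (hp_idem : p * p = p)
    (v : A) (hv : ‖star v * a * v - p‖ < 1) :
    ∃ w : A, star w * a * w = p := by
  let : CStarAlgebra A :=
    { ‹NormedRing A›, ‹StarRing A›, ‹CStarRing A›, ‹NormedAlgebra ℂ A›, ‹StarModule ℂ A›,
      ‹CompleteSpace A› with }
  have hp : IsStarProjection p := ⟨hp_idem, hp_sa⟩
  set x := p * (star v * a * v) * p + (1 - p)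
  have hx : IsStrictlyPositive x :=
    (isUnit_mul_mul_add_one_sub hp.isIdempotentElem (hp.norm_le p) hv).isStrictlyPositive
      (hp.mul_mul_add_one_sub_nonneg (star_left_conjugate_nonneg ha v))
  obtain ⟨c, hc⟩ :=
    hx.exists_star_mul_mul_mul_eq (hp.isIdempotentElem.commute_mul_mul_add_one_sub _)
  refine ⟨v * p * c, ?_⟩
  rw [hp.isIdempotentElem.mul_mul_add_one_sub_mul] at hc
  simpa only [star_mul, hp.isSelfAdjoint.star_eq, mul_assoc] using hc
end

section
/- Let A be a unital C*-algebra, let y₀, y₁ ∈ A be positive elements with y₀ y₁ = y₁, and let p ∈ A be a projection. Suppose there is w₀ ∈ A with ‖w₀* y₁ w₀ − p‖ < 1. Then there exists v ∈ A such that ‖v‖ ≤ 1 and v* y₀ v = p. -/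
/-!
Put `s = √y₁`. From `(y₀ - 1) y₁ = 0` the C*-identity gives `(y₀ - 1) s = 0`, so
`s y₀ s = y₁ = s s`. It therefore suffices to find `u` with `u* z u = p` for the positive element `z = w₀* y₁ w₀`:
then `v = s w₀ u` satisfies `v* y₀ v = v* v = p`, and `v* v = p` forces `‖v‖ ≤ 1`.
For `u`, note that `d = p z p + (1 - p)` is positive, commutes with `p`, and satisfies
`‖1 - d‖ = ‖p (p - z) p‖ < 1`, so it is invertible; `u = p d^{-1/2}` works since `d p = p z p`.
-/

open CFC
open scoped Ring

lemma norm_le_one_of_isStarProjection_star_mul_self {E : Type*} [NonUnitalNormedRing E]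
    [StarRing E] [CStarRing E] {v : E} (hv : IsStarProjection (star v * v)) : ‖v‖ ≤ 1 := by
  have h := hv.norm_le
  rw [CStarRing.norm_star_mul_self] at h
  nlinarith [norm_nonneg v]

section CStarAlgebra

variable {A : Type*} [CStarAlgebra A] [PartialOrder A] [StarOrderedRing A]

lemma mul_sqrt_eq_zero_of_mul_eq_zero {a b : A} (hb : 0 ≤ b) (h : a * b = 0) :
    a * sqrt b = 0 := by
  have h_sq : (a * sqrt b) * star (a * sqrt b) = 0 := by
    rw [star_mul, (sqrt_nonneg b).isSelfAdjoint.star_eq, mul_assoc, ← mul_assoc (sqrt b),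
      sqrt_mul_sqrt_self b, ← mul_assoc, h, zero_mul]
  have h_norm : ‖a * sqrt b‖ * ‖a * sqrt b‖ = 0 := by
    rw [← CStarRing.norm_self_mul_star, h_sq, norm_zero]
  exact norm_eq_zero.mp (mul_self_eq_zero.mp h_norm)

lemma sqrt_mul_mul_sqrt_eq_of_mul_eq {x y : A} (hy : 0 ≤ y) (h : x * y = y) :
    sqrt y * x * sqrt y = y := by
  have h_fix : (x - 1) * sqrt y = 0 :=
    mul_sqrt_eq_zero_of_mul_eq_zero hy (by rw [sub_mul, h, one_mul, sub_self])
  rw [sub_mul, one_mul, sub_eq_zero] at h_fix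
  rw [mul_assoc, h_fix, sqrt_mul_sqrt_self y]

namespace IsStarProjection

variable {p z : A}

lemma isStrictlyPositive_mul_mul_add_one_sub (hp : IsStarProjection p) (hz : 0 ≤ z)
    (h : ‖z - p‖ < 1) : IsStrictlyPositive (p * z * p + (1 - p)) := by
  refine IsUnit.isStrictlyPositive ?_
    (add_nonneg (hp.isSelfAdjoint.conjugate_nonneg hz) hp.one_sub_nonneg)
  have h_sub : 1 - (p * z * p + (1 - p)) = p * (p - z) * p := by
    rw [mul_sub, sub_mul, hp.isIdempotentElem.eq, hp.isIdempotentElem.eq]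
    abel
  have h_norm : ‖1 - (p * z * p + (1 - p))‖ < 1 := by
    rw [h_sub]
    calc ‖p * (p - z) * p‖ ≤ ‖p‖ * ‖p - z‖ * ‖p‖ := norm_mul₃_le
      _ ≤ 1 * ‖z - p‖ * 1 := by rw [norm_sub_rev]; gcongr <;> exact hp.norm_le
      _ < 1 := by simpa using h
  simpa using (Units.oneSub _ h_norm).isUnit

lemma exists_star_mul_mul_eq_of_norm_sub_lt (hp : IsStarProjection p) (hz : 0 ≤ z)
    (h : ‖z - p‖ < 1) : ∃ u : A, star u * z * u = p := by
  set d := p * z * p + (1 - p) with hd_def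
  have hd : IsStrictlyPositive d := hp.isStrictlyPositive_mul_mul_add_one_sub hz h
  have hdp : d * p = p * z * p := by
    simp only [hd_def, add_mul, sub_mul, one_mul, mul_assoc, hp.isIdempotentElem.eq, sub_self,
      add_zero]
  have hpd : p * d = d * p := by
    rw [hdp, hd_def, mul_add, mul_sub, mul_one, hp.isIdempotentElem.eq, sub_self, add_zero,
      ← mul_assoc, ← mul_assoc, hp.isIdempotentElem.eq]
  have hc : Commute p (sqrt d⁻¹ʳ) := by
    obtain ⟨u, hu⟩ := hd.isUnit
    rw [sqrt_eq_cfc, ← hu, Ring.inverse_unit]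
    exact ((hu ▸ hpd : Commute p u).units_inv_right.symm.cfc_nnreal _).symm
  set c := sqrt d⁻¹ʳ
  refine ⟨p * c, ?_⟩
  calc star (p * c) * z * (p * c) = c * (d * p) * c := by
        rw [hdp, star_mul, hp.isSelfAdjoint.star_eq, (sqrt_nonneg _).isSelfAdjoint.star_eq]
        simp only [mul_assoc]
    _ = c * d * c * p := by rw [← mul_assoc c d p, mul_assoc (c * d) p c, hc.eq, ← mul_assoc]
    _ = p := by rw [← conjSqrt_apply, conjSqrt_ringInverse_self d, one_mul]

end IsStarProjection

end CStarAlgebra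

theorem exists_contraction_conj_eq_projection_general
    {A : Type*} [NormedRing A] [StarRing A] [CStarRing A] [CompleteSpace A]
    [NormedAlgebra ℂ A] [StarModule ℂ A] [PartialOrder A] [StarOrderedRing A]
    (y₀ y₁ : A) (hy₁ : 0 ≤ y₁) (hmul : y₀ * y₁ = y₁)
    (p : A) (hp_sa : IsSelfAdjoint p) (hp_idem : p * p = p)
    (w₀ : A) (hw₀ : ‖star w₀ * y₁ * w₀ - p‖ < 1) :
    ∃ v : A, ‖v‖ ≤ 1 ∧ star v * y₀ * v = p := by
  let _ : CStarAlgebra A := {}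
  have hp : IsStarProjection p := ⟨hp_idem, hp_sa⟩
  obtain ⟨u, hu⟩ := hp.exists_star_mul_mul_eq_of_norm_sub_lt
    (star_left_conjugate_nonneg hy₁ w₀) hw₀
  set v := sqrt y₁ * w₀ * u
  have h_conj : ∀ x, sqrt y₁ * x * sqrt y₁ = y₁ → star v * x * v = p := by
    intro x hx
    rw [← hu, ← hx]
    simp only [v, star_mul, (sqrt_nonneg y₁).isSelfAdjoint.star_eq, mul_assoc]
  have h_vv : star v * v = p := by
    simpa using h_conj 1 (by rw [mul_one, sqrt_mul_sqrt_self y₁])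
  refine ⟨v, norm_le_one_of_isStarProjection_star_mul_self (h_vv ▸ hp), ?_⟩
  exact h_conj y₀ (sqrt_mul_mul_sqrt_eq_of_mul_eq hy₁ hmul)

/-- Let `A` be a unital C*-algebra, let `y₀, y₁ ∈ A` be positive with `y₀ y₁ = y₁`, and let
`p ∈ A` be a projection.  If there is `w₀ ∈ A` with `‖w₀* y₁ w₀ − p‖ < 1`, then there exists
`v ∈ A` with `‖v‖ ≤ 1` and `v* y₀ v = p`. -/
theorem exists_contraction_conj_eq_projection
    {A : Type*} [NormedRing A] [StarRing A] [CStarRing A] [CompleteSpace A]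
    [NormedAlgebra ℂ A] [StarModule ℂ A] [PartialOrder A] [StarOrderedRing A]
    (y₀ y₁ : A) (hy₀ : 0 ≤ y₀) (hy₁ : 0 ≤ y₁) (hmul : y₀ * y₁ = y₁)
    (p : A) (hp_sa : IsSelfAdjoint p) (hp_idem : p * p = p)
    (w₀ : A) (hw₀ : ‖star w₀ * y₁ * w₀ - p‖ < 1) :
    ∃ v : A, ‖v‖ ≤ 1 ∧ star v * y₀ * v = p :=
  exists_contraction_conj_eq_projection_general y₀ y₁ hy₁ hmul p hp_sa hp_idem w₀ hw₀
end

section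
/- Let A be a unital C*-algebra with 1 ≠ 0. Then the following are equivalent: (i) for every x ∈ A with x ≠ 0 there exist a, b ∈ A with a x b = 1; (ii) for every positive x ∈ A with x ≠ 0 there exists b ∈ A with b* x b = 1; (iii) for every positive x ∈ A with x ≠ 0 there exists b ∈ A with ‖b* x b − 1‖ < 1. -/
/-!
(i) ⇒ (ii): if `a x b = 1` with `x ≥ 0`, then `x^{1/2} b` is left invertible, so
`c = b* x b = (x^{1/2} b)* (x^{1/2} b)` is positive and invertible, and `b c^{-1/2}` conjugates `x`
to `1`. (iii) ⇒ (i): applied to `x* x`, the element `b* x* x b` is within distance `1` of `1`, hence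
invertible, which exhibits a left and a right factor for `x`.
-/

open CFC

lemma isUnit_of_norm_sub_one_lt_one {R : Type*} [NormedRing R] [HasSummableGeomSeries R] {c : R}
    (h : ‖c - 1‖ < 1) : IsUnit c := by
  simpa using isUnit_one_sub_of_norm_lt_one (x := 1 - c) (by rwa [norm_sub_rev])

lemma exists_mul_mul_eq_one_of_isUnit_mul_mul {M : Type*} [Monoid M] {p x q : M}
    (h : IsUnit (p * x * q)) : ∃ a b : M, a * x * b = 1 := by
  obtain ⟨u, hu⟩ := h
  refine ⟨↑u⁻¹ * p, q, ?_⟩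
  simp only [mul_assoc] at hu ⊢
  rw [← hu, Units.inv_mul]

section CStarAlgebra

variable {A : Type*} [CStarAlgebra A] [PartialOrder A] [StarOrderedRing A]

/-- `1 = star y * (star l * l) * y ≤ ‖star l * l‖ • (star y * y)` bounds `star y * y` below. -/
lemma isStrictlyPositive_star_mul_self_of_mul_eq_one {l y : A} (h : l * y = 1) :
    IsStrictlyPositive (star y * y) := by
  nontriviality A
  have hl : 0 < ‖star l * l‖ := by
    rw [norm_pos_iff, Ne, CStarRing.star_mul_self_eq_zero_iff]
    rintro rfl
    simp at h
  have hle : (1 : A) ≤ ‖star l * l‖ • (star y * y) :=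
    calc (1 : A) = star (l * y) * (l * y) := by simp [h]
      _ = star y * (star l * l) * y := by simp only [star_mul, mul_assoc]
      _ ≤ ‖star l * l‖ • (star y * y) :=
        CStarAlgebra.star_left_conjugate_le_norm_smul (.star_mul_self l)
  simpa [smul_smul, inv_mul_cancel₀ hl.ne'] using
    (isStrictlyPositive_one.of_le hle).smul (inv_pos.mpr hl)

lemma isStrictlyPositive_star_mul_mul_of_mul_mul_eq_one {a x b : A} (hx : 0 ≤ x)
    (h : a * x * b = 1) : IsStrictlyPositive (star b * x * b) := by
  have hsqrt : IsSelfAdjoint (sqrt x) := .of_nonneg (sqrt_nonneg x)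
  have hleft : (a * sqrt x) * (sqrt x * b) = 1 := by
    rw [← h, mul_assoc a, ← mul_assoc (sqrt x), sqrt_mul_sqrt_self x hx, ← mul_assoc]
  simpa [hsqrt.star_eq, mul_assoc, ← mul_assoc (sqrt x), sqrt_mul_sqrt_self x hx] using
    isStrictlyPositive_star_mul_self_of_mul_eq_one hleft

lemma exists_star_mul_mul_eq_one_of_isStrictlyPositive {x b : A}
    (h : IsStrictlyPositive (star b * x * b)) : ∃ d : A, star d * x * d = 1 := by
  set r := (star b * x * b) ^ (-(1 / 2) : ℝ)
  have hr : IsSelfAdjoint r := .of_nonneg rpow_nonneg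
  refine ⟨b * r, ?_⟩
  calc star (b * r) * x * (b * r) = r * (star b * x * b) * r := by
        simp only [star_mul, hr.star_eq, mul_assoc]
    _ = 1 := conjugate_rpow_neg_one_half _ h

end CStarAlgebra

theorem purelyInfinite_simple_tfae_general
    {A : Type*} [NormedRing A] [StarRing A] [CStarRing A] [CompleteSpace A]
    [NormedAlgebra ℂ A] [StarModule ℂ A] [PartialOrder A] [StarOrderedRing A] :
    List.TFAE
      [∀ x : A, x ≠ 0 → ∃ a b : A, a * x * b = 1,
       ∀ x : A, 0 ≤ x → x ≠ 0 → ∃ b : A, star b * x * b = 1,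
       ∀ x : A, 0 ≤ x → x ≠ 0 → ∃ b : A, ‖star b * x * b - 1‖ < 1] := by
  let : CStarAlgebra A := { }
  tfae_have 1 → 2 := fun h x hx hx0 ↦ by
    obtain ⟨a, b, hab⟩ := h x hx0
    exact exists_star_mul_mul_eq_one_of_isStrictlyPositive
      (isStrictlyPositive_star_mul_mul_of_mul_mul_eq_one hx hab)
  tfae_have 2 → 3 := fun h x hx hx0 ↦ by
    obtain ⟨b, hb⟩ := h x hx hx0
    exact ⟨b, by simp [hb]⟩
  tfae_have 3 → 1 := fun h x hx0 ↦ by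
    obtain ⟨b, hb⟩ := h (star x * x) (star_mul_self_nonneg x)
      (CStarRing.star_mul_self_ne_zero_iff x |>.mpr hx0)
    exact exists_mul_mul_eq_one_of_isUnit_mul_mul (p := star b * star x)
      (by simpa only [mul_assoc] using isUnit_of_norm_sub_one_lt_one hb)
  tfae_finish

/-- For a unital C*-algebra `A` with `1 ≠ 0`, the following are equivalent:
(i) for every nonzero `x` there are `a, b` with `a x b = 1` (pure infiniteness and simplicity);
(ii) for every nonzero positive `x` there is `b` with `b* x b = 1`;
(iii) for every nonzero positive `x` there is `b` with `‖b* x b − 1‖ < 1`. -/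
theorem purelyInfinite_simple_tfae
    {A : Type*} [NormedRing A] [StarRing A] [CStarRing A] [CompleteSpace A]
    [NormedAlgebra ℂ A] [StarModule ℂ A] [PartialOrder A] [StarOrderedRing A]
    [Nontrivial A] :
    List.TFAE
      [∀ x : A, x ≠ 0 → ∃ a b : A, a * x * b = 1,
       ∀ x : A, 0 ≤ x → x ≠ 0 → ∃ b : A, star b * x * b = 1,
       ∀ x : A, 0 ≤ x → x ≠ 0 → ∃ b : A, ‖star b * x * b - 1‖ < 1] :=
  purelyInfinite_simple_tfae_general
end

section
/- Let A be a unital C*-algebra such that for every x ∈ A with x ≠ 0 there exist a, b ∈ A with a x b = 1 (i.e., A is purely infinite and simple). Let ρ > 0 and let x ∈ A satisfy ‖x‖ > ρ. Then there are a, b ∈ A such that a x b = 1, ‖a‖ < ρ⁻¹, and ‖b‖ ≤ 1. -/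
/-!
Pick `ρ < σ < ‖x‖` and cut `x⋆x` off below `σ²`: `p = f(x⋆x)` with `f t = max (t - σ²) 0`.
Since `‖x‖²` lies in the spectrum of `x⋆x`, the positive element `p x⋆x p` is nonzero, so pure
infiniteness gives `r` with `r⋆ (p x⋆x p) r = 1`, i.e. `s = x p r` is an isometry. Then
`a = σ⁻¹ s⋆` and `b = σ p r` satisfy `a x b = s⋆s = 1` and `‖a‖ ≤ σ⁻¹ < ρ⁻¹`; and because `f`
vanishes below `σ²`, `σ² p² ≤ p x⋆x p`, whence `b⋆b ≤ s⋆s = 1`.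
-/

open CFC

section CStarAlgebra

variable {A : Type*} [CStarAlgebra A]

lemma cfc_mul_mul_cfc {a : A} (f : ℝ → ℝ) (hf : ContinuousOn f (spectrum ℝ a) := by cfc_cont_tac)
    (ha : IsSelfAdjoint a := by cfc_tac) :
    cfc f a * a * cfc f a = cfc (fun t ↦ f t * t * f t) a := by
  nth_rewrite 2 [← cfc_id' ℝ a]
  rw [← cfc_mul .., ← cfc_mul ..]

lemma cfc_ne_zero_of_mem_spectrum {a : A} {f : ℝ → ℝ} {t : ℝ} (ht : t ∈ spectrum ℝ a)
    (hft : f t ≠ 0) (hf : ContinuousOn f (spectrum ℝ a) := by cfc_cont_tac)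
    (ha : IsSelfAdjoint a := by cfc_tac) : cfc f a ≠ 0 := fun h ↦
  hft (eqOn_of_cfc_eq_cfc (h.trans (cfc_zero ℝ a).symm) hf continuousOn_const ha ht)

variable [PartialOrder A] [StarOrderedRing A]

lemma norm_le_one_iff_star_mul_self_le_one (a : A) : ‖a‖ ≤ 1 ↔ star a * a ≤ 1 := by
  rw [← CStarAlgebra.norm_le_one_iff_of_nonneg _ (star_mul_self_nonneg a),
    CStarRing.norm_star_mul_self, ← sq, sq_le_one_iff₀ (norm_nonneg a)]

lemma isUnit_star_mul_self_of_mul_eq_one {u v : A} (h : v * u = 1) : IsUnit (star u * u) := by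
  nontriviality A
  have hv : ‖v‖ ^ 2 ≠ 0 := pow_ne_zero 2 (norm_ne_zero_iff.mpr (left_ne_zero_of_mul_eq_one h))
  have hle : 1 ≤ (‖v‖ ^ 2) • (star u * u) :=
    calc (1 : A) = star (v * u) * (v * u) := by rw [h, star_one, one_mul]
      _ = star u * (star v * v) * u := by simp only [star_mul, mul_assoc]
      _ ≤ star u * algebraMap ℝ A (‖v‖ ^ 2) * u :=
          star_left_conjugate_le_conjugate CStarAlgebra.star_mul_le_algebraMap_norm_sq u
      _ = (‖v‖ ^ 2) • (star u * u) := by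
          rw [Algebra.algebraMap_eq_smul_one, mul_smul_comm, mul_one, smul_mul_assoc]
  exact (isUnit_smul_iff (Units.mk0 _ hv) _).mp (CStarAlgebra.isUnit_of_le 1 hle)

lemma exists_star_mul_mul_eq_one_of_mul_mul_eq_one {z c d : A} (hz : 0 ≤ z)
    (h : c * z * d = 1) : ∃ r, star r * z * r = 1 := by
  set w := star d * z * d
  have hw : IsStrictlyPositive w := by
    refine IsStrictlyPositive.iff_of_unital.mpr ⟨star_left_conjugate_nonneg hz d, ?_⟩
    have hsplit : (c * sqrt z) * (sqrt z * d) = 1 := by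
      rwa [mul_assoc, ← mul_assoc (sqrt z), sqrt_mul_sqrt_self z, ← mul_assoc]
    convert isUnit_star_mul_self_of_mul_eq_one hsplit using 1
    rw [star_mul, (sqrt_nonneg z).isSelfAdjoint.star_eq, mul_assoc, ← mul_assoc (sqrt z),
      sqrt_mul_sqrt_self z, ← mul_assoc]
  refine ⟨d * w ^ (-(1 / 2) : ℝ), ?_⟩
  rw [star_mul, (rpow_nonneg (a := w)).isSelfAdjoint.star_eq]
  calc _ = w ^ (-(1 / 2) : ℝ) * w * w ^ (-(1 / 2) : ℝ) := by simp only [w, mul_assoc]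
    _ = 1 := conjugate_rpow_neg_one_half w

lemma smul_cfc_mul_self_le_cfc_mul_mul_cfc {a : A} {c : ℝ} {f : ℝ → ℝ} (hf0 : ∀ t < c, f t = 0)
    (hf : ContinuousOn f (spectrum ℝ a) := by cfc_cont_tac) (ha : IsSelfAdjoint a := by cfc_tac) :
    c • (cfc f a * cfc f a) ≤ cfc f a * a * cfc f a := by
  rw [← cfc_mul .., ← cfc_smul .., cfc_mul_mul_cfc f]
  refine cfc_mono fun t _ ↦ ?_
  rcases lt_or_ge t c with htc | hct
  · simp [hf0 t htc]
  · have := mul_le_mul_of_nonneg_left hct (mul_self_nonneg (f t))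
    simp only [smul_eq_mul]
    linarith

lemma sq_norm_mem_spectrum_star_mul_self [Nontrivial A] (x : A) :
    ‖x‖ ^ 2 ∈ spectrum ℝ (star x * x) := by
  simpa [CStarRing.norm_star_mul_self, sq] using
    CStarAlgebra.norm_mem_spectrum_of_nonneg (star_mul_self_nonneg x)

lemma norm_smul_cfc_mul_le_one_of_star_mul_self_eq_one {x r : A} {σ : ℝ} {f : ℝ → ℝ}
    (hf0 : ∀ t < σ ^ 2, f t = 0)
    (hf : ContinuousOn f (spectrum ℝ (star x * x)) := by cfc_cont_tac)
    (hr : star (x * cfc f (star x * x) * r) * (x * cfc f (star x * x) * r) = 1) :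
    ‖σ • (cfc f (star x * x) * r)‖ ≤ 1 := by
  set p := cfc f (star x * x)
  rw [norm_le_one_iff_star_mul_self_le_one, ← hr]
  calc star (σ • (p * r)) * (σ • (p * r)) = star r * ((σ ^ 2) • (p * p)) * r := by
        simp only [star_smul, star_mul, IsSelfAdjoint.cfc.star_eq, p, smul_smul, star_trivial,
          sq, mul_smul_comm, smul_mul_assoc, mul_assoc]
    _ ≤ star r * (p * (star x * x) * p) * r :=
        star_left_conjugate_le_conjugate (smul_cfc_mul_self_le_cfc_mul_mul_cfc hf0) r
    _ = star (x * p * r) * (x * p * r) := by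
        simp only [star_mul, IsSelfAdjoint.cfc.star_eq, p, mul_assoc]

end CStarAlgebra

/-- Let `A` be a unital C*-algebra which is purely infinite and simple, in the sense that for
every nonzero `x ∈ A` there are `a, b ∈ A` with `a x b = 1`.  If `ρ > 0` and `‖x‖ > ρ`, then
there are `a, b ∈ A` with `a x b = 1`, `‖a‖ < ρ⁻¹` and `‖b‖ ≤ 1`. -/
theorem exists_one_eq_mul_with_norm_bounds
    {A : Type*} [NormedRing A] [StarRing A] [CStarRing A] [CompleteSpace A]
    [NormedAlgebra ℂ A] [StarModule ℂ A] [PartialOrder A] [StarOrderedRing A]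
    (hpi : ∀ x : A, x ≠ 0 → ∃ a b : A, a * x * b = 1)
    (ρ : ℝ) (hρ : 0 < ρ) (x : A) (hx : ρ < ‖x‖) :
    ∃ a b : A, a * x * b = 1 ∧ ‖a‖ < ρ⁻¹ ∧ ‖b‖ ≤ 1 := by
  let _ : CStarAlgebra A := {}
  have : Nontrivial A := ⟨⟨x, 0, by rintro rfl; simp at hx; linarith⟩⟩
  obtain ⟨σ, hρσ, hσx⟩ := exists_between hx
  have hσ : 0 < σ := hρ.trans hρσ
  set p := cfc (fun t ↦ max (t - σ ^ 2) 0) (star x * x)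
  have hp : star (x * p) * (x * p) = p * (star x * x) * p := by
    simp only [star_mul, IsSelfAdjoint.cfc.star_eq, mul_assoc, p]
  have hpxxp : p * (star x * x) * p ≠ 0 := by
    have hgap : 0 < ‖x‖ ^ 2 - σ ^ 2 := sub_pos.mpr (by gcongr)
    rw [cfc_mul_mul_cfc _]
    refine cfc_ne_zero_of_mem_spectrum (sq_norm_mem_spectrum_star_mul_self x) ?_
    simp only [max_eq_left hgap.le]
    exact (mul_pos (mul_pos hgap (pow_pos (hσ.trans hσx) 2)) hgap).ne'
  obtain ⟨c, d, hcd⟩ := hpi _ hpxxp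
  obtain ⟨r, hr⟩ := exists_star_mul_mul_eq_one_of_mul_mul_eq_one
    (hp ▸ star_mul_self_nonneg (x * p)) hcd
  have hs : star (x * p * r) * (x * p * r) = 1 := by
    rw [← hr, ← hp, star_mul]; simp only [mul_assoc]
  refine ⟨σ⁻¹ • star (x * p * r), σ • (p * r), ?_, ?_,
    norm_smul_cfc_mul_le_one_of_star_mul_self_eq_one
      (fun t ht ↦ max_eq_right (sub_nonpos.mpr ht.le)) (hr := hs)⟩
  · rw [smul_mul_assoc, smul_mul_smul_comm, inv_mul_cancel₀ hσ.ne', one_smul, ← hs]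
    simp only [mul_assoc]
  · have hs1 : ‖x * p * r‖ ≤ 1 := (norm_le_one_iff_star_mul_self_le_one _).mpr hs.le
    rw [norm_smul, norm_star, Real.norm_of_nonneg (inv_pos.mpr hσ).le]
    calc σ⁻¹ * ‖x * p * r‖ ≤ σ⁻¹ := mul_le_of_le_one_right (inv_pos.mpr hσ).le hs1
      _ < ρ⁻¹ := inv_strictAnti₀ hρ hρσ
end

section
/- Let N ≥ 2 be an integer, let ω = exp(2πi/N) viewed as an element of the circle group S¹ ⊆ ℂ, let s ∈ M_N(ℂ) be the cyclic shift matrix (s_{j,k} = 1 if k ≡ j + 1 mod N, else 0, indices 0, …, N−1), and let c ∈ M_N(ℂ) have entries c_{j,k} = N^{−1/2} ω^{j k}. For λ ∈ ℂ^N let ε̃₀(λ) ∈ C(S¹, M_N(ℂ)) be the constant function with value c* diag(λ) c. Then ε̃₀ is an injective unital *-homomorphism from ℂ^N into C(S¹, M_N(ℂ)), and its range is exactly the set of f ∈ C(S¹, M_N(ℂ)) satisfying both: f(ω z) = s f(z) s* for all z ∈ S¹, and f(ζ z) = f(z) for all ζ, z ∈ S¹. -/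
set_option linter.unusedVariables false

open Finset in
lemma aux_sum_zpow {N : ℕ} (hN : 2 ≤ N) {u : ℂ} (hu : IsPrimitiveRoot u N) (t : ℤ) :
    ∑ l : Fin N, u ^ ((l : ℤ) * t) = if (N:ℤ) ∣ t then (N:ℂ) else 0 := by
  have hNz : u ^ (N:ℤ) = 1 := by rw [zpow_natCast, hu.pow_eq_one]
  have hrw : ∀ l : Fin N, u ^ ((l : ℤ) * t) = (u ^ t) ^ (l : ℕ) := by
    intro l
    rw [mul_comm, zpow_mul, zpow_natCast]
  simp only [hrw]
  split_ifs with h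
  · have : u ^ t = 1 := (hu.zpow_eq_one_iff_dvd t).mpr h
    simp [this]
  · have hv1 : u ^ t ≠ 1 := fun hc => h ((hu.zpow_eq_one_iff_dvd t).mp hc)
    have hvN : (u ^ t) ^ N = 1 := by
      rw [← zpow_natCast (u ^ t) N, ← zpow_mul, mul_comm, zpow_mul, hNz, one_zpow]
    rw [Fin.sum_univ_eq_sum_range (fun l => (u ^ t) ^ l), geom_sum_eq hv1, hvN, sub_self,
      zero_div]

lemma aux_dvd_iff {N : ℕ} (hN : 2 ≤ N) (j k : Fin N) :
    (N:ℤ) ∣ ((k:ℤ) - ((j:ℤ) + 1)) ↔ (k : ℕ) = ((j:ℕ) + 1) % N := by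
  rw [Int.dvd_iff_emod_eq_zero, ← Int.emod_eq_emod_iff_emod_sub_eq_zero]
  rw [Int.emod_eq_of_lt (by positivity) (by exact_mod_cast k.isLt)]
  constructor
  · intro h
    have : ((k:ℕ) : ℤ) = ((((j:ℕ)+1) % N : ℕ) : ℤ) := by push_cast; omega
    exact_mod_cast this
  · intro h
    have : ((k:ℕ) : ℤ) = ((((j:ℕ)+1) % N : ℕ) : ℤ) := by exact_mod_cast h
    push_cast at this; omega

lemma aux_dvd_iff' {N : ℕ} (hN : 2 ≤ N) (j k : Fin N) :
    (N:ℤ) ∣ ((k:ℤ) - (j:ℤ)) ↔ j = k := by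
  constructor
  · intro h
    obtain ⟨t, ht⟩ := h
    have h1 : (k:ℤ) < N := by exact_mod_cast k.isLt
    have h2 : (j:ℤ) < N := by exact_mod_cast j.isLt
    have : t = 0 := by nlinarith [Int.ofNat_nonneg (k:ℕ), Int.ofNat_nonneg (j:ℕ)]
    rw [this, mul_zero] at ht
    have : (j:ℤ) = (k:ℤ) := by omega
    exact Fin.ext (by exact_mod_cast this)
  · rintro rfl; simp

noncomputable def cMat (N : ℕ) (u : ℂ) : Matrix (Fin N) (Fin N) ℂ :=
  Matrix.of fun j k => ((Real.sqrt N : ℂ))⁻¹ * u ^ ((j : ℕ) * (k : ℕ))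

noncomputable def eMat (N : ℕ) (u : ℂ) : Matrix (Fin N) (Fin N) ℂ :=
  Matrix.diagonal fun l : Fin N => u ^ (-(l : ℤ))

def sMat (N : ℕ) : Matrix (Fin N) (Fin N) ℂ :=
  Matrix.of fun j k => if (k : ℕ) = ((j : ℕ) + 1) % N then 1 else 0

lemma aux_sqrt (N : ℕ) (hN : 2 ≤ N) :
    ((Real.sqrt N : ℂ))⁻¹ * ((Real.sqrt N : ℂ))⁻¹ * (N:ℂ) = 1 := by
  have h : Real.sqrt N * Real.sqrt N = (N:ℝ) := Real.mul_self_sqrt (by positivity)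
  have hR : (Real.sqrt N)⁻¹ * (Real.sqrt N)⁻¹ * (N:ℝ) = 1 := by
    rw [← mul_inv, h]
    exact inv_mul_cancel₀ (Nat.cast_ne_zero.mpr (by omega))
  exact_mod_cast hR

section Matrices

variable {N : ℕ} {u : ℂ}

lemma aux_star_c_mul_c (hN : 2 ≤ N) (hu : IsPrimitiveRoot u N)
    (hconj : (starRingEnd ℂ) u = u⁻¹) : star (cMat N u) * cMat N u = 1 := by
  have hu0 : u ≠ 0 := hu.ne_zero (by omega : N ≠ 0)
  ext j k
  rw [Matrix.mul_apply, Matrix.one_apply]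
  have hterm : ∀ l : Fin N, (star (cMat N u)) j l * (cMat N u) l k
      = ((Real.sqrt N:ℂ))⁻¹ * ((Real.sqrt N:ℂ))⁻¹ * u ^ ((l:ℤ) * ((k:ℤ) - (j:ℤ))) := by
    intro l
    rw [Matrix.star_apply]
    simp only [cMat, Matrix.of_apply, star_mul', star_pow, star_inv₀]
    rw [Complex.star_def, Complex.conj_ofReal, hconj, inv_pow,
      ← zpow_natCast u ((l:ℕ)*(j:ℕ)), ← zpow_neg, ← zpow_natCast u ((l:ℕ)*(k:ℕ)),
      mul_mul_mul_comm, ← zpow_add₀ hu0]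
    congr 1
    push_cast; ring_nf
  rw [Finset.sum_congr rfl (fun l _ => hterm l), ← Finset.mul_sum,
    aux_sum_zpow hN hu ((k:ℤ) - (j:ℤ))]
  by_cases h : j = k
  · rw [if_pos ((aux_dvd_iff' hN j k).mpr h), if_pos h, aux_sqrt N hN]
  · rw [if_neg (fun hd => h ((aux_dvd_iff' hN j k).mp hd)), if_neg h, mul_zero]

lemma aux_c_mul_star_c (hN : 2 ≤ N) (hu : IsPrimitiveRoot u N)
    (hconj : (starRingEnd ℂ) u = u⁻¹) : cMat N u * star (cMat N u) = 1 :=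
  mul_eq_one_comm.mp (aux_star_c_mul_c hN hu hconj)

lemma aux_s_eq (hN : 2 ≤ N) (hu : IsPrimitiveRoot u N)
    (hconj : (starRingEnd ℂ) u = u⁻¹) : sMat N = star (cMat N u) * eMat N u * cMat N u := by
  have hu0 : u ≠ 0 := hu.ne_zero (by omega : N ≠ 0)
  ext j k
  rw [Matrix.mul_apply]
  have hterm : ∀ l : Fin N, (star (cMat N u) * eMat N u) j l * (cMat N u) l k
      = ((Real.sqrt N:ℂ))⁻¹ * ((Real.sqrt N:ℂ))⁻¹ * u ^ ((l:ℤ) * ((k:ℤ) - ((j:ℤ) + 1))) := by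
    intro l
    rw [eMat, Matrix.mul_diagonal, Matrix.star_apply]
    simp only [cMat, Matrix.of_apply, star_mul', star_pow, star_inv₀]
    rw [Complex.star_def, Complex.conj_ofReal, hconj, inv_pow,
      ← zpow_natCast u ((l:ℕ)*(j:ℕ)), ← zpow_neg, ← zpow_natCast u ((l:ℕ)*(k:ℕ))]
    rw [mul_assoc ((Real.sqrt (N:ℝ) : ℂ))⁻¹, ← zpow_add₀ hu0, mul_mul_mul_comm,
      ← zpow_add₀ hu0]
    congr 1
    push_cast; ring_nf
  rw [Finset.sum_congr rfl (fun l _ => hterm l), ← Finset.mul_sum,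
    aux_sum_zpow hN hu ((k:ℤ) - ((j:ℤ)+1))]
  rw [sMat, Matrix.of_apply]
  by_cases h : (k:ℕ) = ((j:ℕ) + 1) % N
  · rw [if_pos ((aux_dvd_iff hN j k).mpr h), if_pos h, aux_sqrt N hN]
  · rw [if_neg (fun hd => h ((aux_dvd_iff hN j k).mp hd)), if_neg h, mul_zero]

lemma aux_star_e (hN : 2 ≤ N) (hu : IsPrimitiveRoot u N)
    (hconj : (starRingEnd ℂ) u = u⁻¹) : star (eMat N u) = Matrix.diagonal fun l : Fin N => u ^ (l:ℤ) := by
  have hu0 : u ≠ 0 := hu.ne_zero (by omega : N ≠ 0)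
  rw [eMat, Matrix.star_eq_conjTranspose, Matrix.diagonal_conjTranspose]
  refine congrArg Matrix.diagonal (funext fun l => ?_)
  show star (u ^ (-(l:ℤ))) = u ^ ((l:ℤ))
  rw [Complex.star_def, map_zpow₀, hconj, inv_zpow, ← zpow_neg, neg_neg]

lemma aux_e_mul_star_e (hN : 2 ≤ N) (hu : IsPrimitiveRoot u N)
    (hconj : (starRingEnd ℂ) u = u⁻¹) : eMat N u * star (eMat N u) = 1 := by
  have hu0 : u ≠ 0 := hu.ne_zero (by omega : N ≠ 0)
  rw [aux_star_e hN hu hconj, eMat, Matrix.diagonal_mul_diagonal]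
  convert Matrix.diagonal_one with l
  rw [← zpow_add₀ hu0, neg_add_cancel, zpow_zero]

lemma aux_star_e_mul_e (hN : 2 ≤ N) (hu : IsPrimitiveRoot u N)
    (hconj : (starRingEnd ℂ) u = u⁻¹) : star (eMat N u) * eMat N u = 1 := by
  have hu0 : u ≠ 0 := hu.ne_zero (by omega : N ≠ 0)
  rw [aux_star_e hN hu hconj, eMat, Matrix.diagonal_mul_diagonal]
  convert Matrix.diagonal_one with l
  rw [← zpow_add₀ hu0, add_neg_cancel, zpow_zero]

lemma aux_e_distinct (hN : 2 ≤ N) (hu : IsPrimitiveRoot u N) {j k : Fin N} (hjk : j ≠ k) : u ^ (-(j:ℤ)) ≠ u ^ (-(k:ℤ)) := by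
  have hu0 : u ≠ 0 := hu.ne_zero (by omega : N ≠ 0)
  intro h
  apply hjk
  apply (aux_dvd_iff' hN j k).mp
  rw [← hu.zpow_eq_one_iff_dvd]
  have := congrArg (· * u ^ (k:ℤ)) h
  simp only [← zpow_add₀ hu0] at this
  rw [show -(j:ℤ) + k = (k:ℤ) - j from by ring, show -(k:ℤ) + k = 0 from by ring,
    zpow_zero] at this
  exact this

end Matrices

/-- Let `N ≥ 2`, `ω = exp(2πi/N) ∈ S¹`, `s` the cyclic shift matrix and `c` the Fourier
matrix in `M_N(ℂ)`.  For `λ ∈ ℂ^N` let `ε̃₀(λ) ∈ C(S¹, M_N(ℂ))` be the constant function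
with value `c* diag(λ) c`.  Then `ε̃₀` is an injective unital *-homomorphism from `ℂ^N` into
`C(S¹, M_N(ℂ))`, and its range is exactly the set of `f` with `f(ωz) = s f(z) s*` for all
`z` and `f(ζz) = f(z)` for all `ζ, z` (the fixed-point algebra `R^γ`). -/
theorem const_diag_conj_iso_fixedPointAlgebra (N : ℕ) (hN : 2 ≤ N) :
    let ω : Circle := Circle.exp (2 * Real.pi / N)
    let ωC : ℂ := Complex.exp (2 * Real.pi * Complex.I / N)
    let s : Matrix (Fin N) (Fin N) ℂ :=
      Matrix.of fun j k => if (k : ℕ) = ((j : ℕ) + 1) % N then 1 else 0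
    let c : Matrix (Fin N) (Fin N) ℂ :=
      Matrix.of fun j k => ((Real.sqrt N : ℂ))⁻¹ * ωC ^ ((j : ℕ) * (k : ℕ))
    let ε : (Fin N → ℂ) → C(Circle, Matrix (Fin N) (Fin N) ℂ) :=
      fun l => ContinuousMap.const Circle (star c * Matrix.diagonal l * c)
    Function.Injective ε ∧
    ε 1 = 1 ∧
    (∀ x y, ε (x * y) = ε x * ε y) ∧
    (∀ x y, ε (x + y) = ε x + ε y) ∧
    (∀ (μ : ℂ) (x), ε (μ • x) = μ • ε x) ∧
    (∀ x, ε (star x) = star (ε x)) ∧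
    Set.range ε = {f : C(Circle, Matrix (Fin N) (Fin N) ℂ) |
      (∀ z : Circle, f (ω * z) = s * f z * star s) ∧
      (∀ ζ z : Circle, f (ζ * z) = f z)} := by
  intro ω ωC s c ε
  have hu : IsPrimitiveRoot ωC N := Complex.isPrimitiveRoot_exp N (by omega)
  have hconj : (starRingEnd ℂ) ωC = ωC⁻¹ := by
    show (starRingEnd ℂ) (Complex.exp (2 * Real.pi * Complex.I / N)) =
      (Complex.exp (2 * Real.pi * Complex.I / N))⁻¹
    rw [← Complex.exp_conj, ← Complex.exp_neg]
    congr 1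
    simp only [map_div₀, map_mul, Complex.conj_I, Complex.conj_ofReal, map_ofNat,
      Complex.conj_natCast]
    ring
  have hcdef : c = cMat N ωC := rfl
  have hsdef : s = sMat N := rfl
  have hc1 : star c * c = 1 := by rw [hcdef]; exact aux_star_c_mul_c hN hu hconj
  have hc2 : c * star c = 1 := by rw [hcdef]; exact aux_c_mul_star_c hN hu hconj
  set e : Matrix (Fin N) (Fin N) ℂ := eMat N ωC with hedef
  have hs_eq : s = star c * e * c := by rw [hcdef, hsdef, hedef]; exact aux_s_eq hN hu hconj
  have hee : e * star e = 1 := aux_e_mul_star_e hN hu hconj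
  have hsee : star e * e = 1 := aux_star_e_mul_e hN hu hconj
  have hcc : ∀ X : Matrix (Fin N) (Fin N) ℂ, c * (star c * X) = X := fun X => by
    rw [← Matrix.mul_assoc, hc2, Matrix.one_mul]
  have hcc2 : ∀ X : Matrix (Fin N) (Fin N) ℂ, star c * (c * X) = X := fun X => by
    rw [← Matrix.mul_assoc, hc1, Matrix.one_mul]
  have key : ∀ X : Matrix (Fin N) (Fin N) ℂ, c * (star c * X * c) * star c = X := by
    intro X
    rw [Matrix.mul_assoc (star c) X c, ← Matrix.mul_assoc c (star c) _, hc2, Matrix.one_mul,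
      Matrix.mul_assoc X c (star c), hc2, Matrix.mul_one]
  have hεapp : ∀ x z, ε x z = star c * Matrix.diagonal x * c := fun x z => rfl
  have hse : star s = star c * (star e * c) := by
    rw [hs_eq, star_mul, star_mul, star_star]
  refine ⟨?_, ?_, ?_, ?_, ?_, ?_, ?_⟩
  · -- injective
    intro x y h
    have h1 : star c * Matrix.diagonal x * c = star c * Matrix.diagonal y * c := by
      have := DFunLike.congr_fun h (1 : Circle)
      rwa [hεapp, hεapp] at this
    have hD : Matrix.diagonal x = Matrix.diagonal y := by
      rw [← key (Matrix.diagonal x), h1, key]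
    funext j
    have := congrArg (fun M : Matrix (Fin N) (Fin N) ℂ => M j j) hD
    simpa [Matrix.diagonal_apply_eq] using this
  · -- unital
    refine ContinuousMap.ext fun z => ?_
    rw [hεapp, ContinuousMap.one_apply,
      show Matrix.diagonal (1 : Fin N → ℂ) = 1 from Matrix.diagonal_one,
      Matrix.mul_one, hc1]
  · -- multiplicative
    intro x y
    refine ContinuousMap.ext fun z => ?_
    rw [ContinuousMap.mul_apply, hεapp, hεapp, hεapp,
      show Matrix.diagonal (x * y) = Matrix.diagonal x * Matrix.diagonal y from
        (Matrix.diagonal_mul_diagonal x y).symm]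
    simp only [Matrix.mul_assoc, hcc]
  · -- additive
    intro x y
    refine ContinuousMap.ext fun z => ?_
    rw [ContinuousMap.add_apply, hεapp, hεapp, hεapp,
      show Matrix.diagonal (x + y) = Matrix.diagonal x + Matrix.diagonal y from
        (Matrix.diagonal_add x y).symm,
      Matrix.mul_add, Matrix.add_mul]
  · -- smul
    intro μ x
    refine ContinuousMap.ext fun z => ?_
    rw [ContinuousMap.smul_apply, hεapp, hεapp, Matrix.diagonal_smul,
      mul_smul_comm, smul_mul_assoc]
  · -- star
    intro x
    refine ContinuousMap.ext fun z => ?_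
    rw [ContinuousMap.star_apply, hεapp, hεapp, star_mul, star_mul, star_star,
      show star (Matrix.diagonal x) = Matrix.diagonal (star x) from by
        rw [Matrix.star_eq_conjTranspose, Matrix.diagonal_conjTranspose],
      Matrix.mul_assoc]
  · -- range
    ext f
    simp only [Set.mem_range, Set.mem_setOf_eq]
    constructor
    · rintro ⟨x, rfl⟩
      constructor
      · intro z
        rw [hεapp, hεapp, hse, hs_eq]
        have hcomm : e * Matrix.diagonal x = Matrix.diagonal x * e := by
          rw [hedef, eMat, Matrix.diagonal_mul_diagonal, Matrix.diagonal_mul_diagonal]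
          exact congrArg Matrix.diagonal (funext fun i => mul_comm _ _)
        simp only [Matrix.mul_assoc, hcc]
        rw [← Matrix.mul_assoc e (Matrix.diagonal x), hcomm,
          Matrix.mul_assoc (Matrix.diagonal x) e, ← Matrix.mul_assoc e (star e) c, hee,
          Matrix.one_mul]
      · intro ζ z; rfl
    · rintro ⟨h1, h2⟩
      have hfz : ∀ z, f z = f 1 := fun z => by
        have := h2 z 1; rwa [mul_one] at this
      set m : Matrix (Fin N) (Fin N) ℂ := f 1 with hmdef
      have hm : m = s * m * star s := by
        have := h1 1
        rwa [mul_one, hfz ω] at this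
      have hss : star s * s = 1 := by
        rw [hse, hs_eq]
        simp only [Matrix.mul_assoc, hcc]
        rw [← Matrix.mul_assoc (star e) e c, hsee, Matrix.one_mul, hc1]
      have hcomm : m * s = s * m := by
        calc m * s = s * m * star s * s := by rw [← hm]
        _ = s * m * (star s * s) := by rw [Matrix.mul_assoc]
        _ = s * m := by rw [hss, Matrix.mul_one]
      have hcomm' : m * (star c * e * c) = (star c * e * c) * m := by
        rw [← hs_eq]; exact hcomm
      have hbe : (c * m * star c) * e = e * (c * m * star c) := by
        have h4 := congrArg (fun X => c * X * star c) hcomm'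
        simp only [Matrix.mul_assoc, hcc, hc2, Matrix.mul_one] at h4 ⊢
        exact h4
      have hb0 : ∀ j k : Fin N, j ≠ k → (c * m * star c) j k = 0 := by
        intro j k hjk
        have hentry : (c * m * star c) j k * ωC ^ (-(k:ℤ)) =
            ωC ^ (-(j:ℤ)) * (c * m * star c) j k := by
          have := congrArg (fun M : Matrix (Fin N) (Fin N) ℂ => M j k) hbe
          simpa [hedef, eMat, Matrix.mul_diagonal, Matrix.diagonal_mul] using this
        have hz : (c * m * star c) j k * (ωC ^ (-(k:ℤ)) - ωC ^ (-(j:ℤ))) = 0 := by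
          linear_combination hentry
        rcases mul_eq_zero.mp hz with h | h
        · exact h
        · exact absurd (sub_eq_zero.mp h).symm (aux_e_distinct hN hu hjk)
      refine ⟨fun j => (c * m * star c) j j, ?_⟩
      have hbd : Matrix.diagonal (fun j => (c * m * star c) j j) = c * m * star c := by
        ext j k
        by_cases h : j = k
        · subst h; rw [Matrix.diagonal_apply_eq]
        · rw [Matrix.diagonal_apply_ne _ h, hb0 j k h]
      refine ContinuousMap.ext fun z => ?_
      rw [hεapp, hbd, hfz z]
      simp only [Matrix.mul_assoc, hcc2, hc1, Matrix.mul_one]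
end

section
/- Let X ⊆ [0,1] be a nonempty closed set and let δ > 0. Then there exist a closed subset Y ⊆ X which is a finite union of closed intervals [a, b] with a, b ∈ X (where a = b, i.e. singletons, are allowed), and a continuous map h : X → Y such that h(y) = y for every y ∈ Y and |h(x) − x| < 2δ for every x ∈ X. -/
open Set

noncomputable def Afun (X : Set ℝ) (t : ℝ) : ℝ := sInf {s | Set.Icc s t ⊆ X}
noncomputable def Bfun (X : Set ℝ) (t : ℝ) : ℝ := sSup {s | Set.Icc t s ⊆ X}

section
variable {X : Set ℝ}

lemma mem_Aset_self {t : ℝ} (ht : t ∈ X) : t ∈ {s | Icc s t ⊆ X} := by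
  intro u hu
  have : u = t := le_antisymm hu.2 hu.1
  rwa [this]

lemma mem_Bset_self {t : ℝ} (ht : t ∈ X) : t ∈ {s | Icc t s ⊆ X} := by
  intro u hu
  have : u = t := le_antisymm hu.2 hu.1
  rwa [this]

lemma bddBelow_Aset (hX1 : X ⊆ Icc 0 1) {t : ℝ} (ht : t ∈ X) :
    BddBelow {s | Icc s t ⊆ X} := by
  refine ⟨0, fun s hs => ?_⟩
  rcases le_or_gt s t with h | h
  · exact (hX1 (hs ⟨le_refl s, h⟩)).1
  · exact le_trans (hX1 ht).1 h.le

lemma bddAbove_Bset (hX1 : X ⊆ Icc 0 1) {t : ℝ} (ht : t ∈ X) :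
    BddAbove {s | Icc t s ⊆ X} := by
  refine ⟨1, fun s hs => ?_⟩
  rcases le_or_gt t s with h | h
  · exact (hX1 (hs ⟨h, le_refl s⟩)).2
  · exact le_trans h.le (hX1 ht).2

lemma Afun_le (hX1 : X ⊆ Icc 0 1) {t : ℝ} (ht : t ∈ X) : Afun X t ≤ t :=
  csInf_le (bddBelow_Aset hX1 ht) (mem_Aset_self ht)

lemma le_Bfun (hX1 : X ⊆ Icc 0 1) {t : ℝ} (ht : t ∈ X) : t ≤ Bfun X t :=
  le_csSup (bddAbove_Bset hX1 ht) (mem_Bset_self ht)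

lemma Ioc_Afun_subset {t : ℝ} (ht : t ∈ X) :
    Ioc (Afun X t) t ⊆ X := by
  intro u hu
  obtain ⟨s, hs, hst⟩ := exists_lt_of_csInf_lt ⟨t, mem_Aset_self ht⟩ hu.1
  exact hs ⟨hst.le, hu.2⟩

lemma Ico_Bfun_subset {t : ℝ} (ht : t ∈ X) :
    Ico t (Bfun X t) ⊆ X := by
  intro u hu
  obtain ⟨s, hs, hst⟩ := exists_lt_of_lt_csSup ⟨t, mem_Bset_self ht⟩ hu.2
  exact hs ⟨hu.1, hst.le⟩

lemma Afun_mem (hX1 : X ⊆ Icc 0 1) (hcl : IsClosed X) {t : ℝ} (ht : t ∈ X) :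
    Afun X t ∈ X := by
  rcases eq_or_lt_of_le (Afun_le hX1 ht) with h | h
  · rwa [h]
  · have h1 : Afun X t ∈ closure (Ioc (Afun X t) t) := by
      rw [closure_Ioc h.ne]
      exact ⟨le_refl _, (Afun_le hX1 ht)⟩
    have := closure_mono (Ioc_Afun_subset ht) h1
    rwa [hcl.closure_eq] at this

lemma Bfun_mem (hX1 : X ⊆ Icc 0 1) (hcl : IsClosed X) {t : ℝ} (ht : t ∈ X) :
    Bfun X t ∈ X := by
  rcases eq_or_lt_of_le (le_Bfun hX1 ht) with h | h
  · rwa [← h]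
  · have h1 : Bfun X t ∈ closure (Ico t (Bfun X t)) := by
      rw [closure_Ico h.ne]
      exact ⟨le_Bfun hX1 ht, le_refl _⟩
    have := closure_mono (Ico_Bfun_subset ht) h1
    rwa [hcl.closure_eq] at this

lemma Icc_AB_subset (hX1 : X ⊆ Icc 0 1) (hcl : IsClosed X) {t : ℝ} (ht : t ∈ X) :
    Icc (Afun X t) (Bfun X t) ⊆ X := by
  intro u hu
  rcases le_or_gt u t with h | h
  · rcases eq_or_lt_of_le hu.1 with h1 | h1
    · rw [← h1]; exact Afun_mem hX1 hcl ht
    · exact Ioc_Afun_subset ht ⟨h1, h⟩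
  · rcases eq_or_lt_of_le hu.2 with h1 | h1
    · rw [h1]; exact Bfun_mem hX1 hcl ht
    · exact Ico_Bfun_subset ht ⟨h.le, h1⟩

end

open Classical in
noncomputable def cfun (X : Set ℝ) (l r : ℝ) : ℝ :=
  if h : ((l + r) / 2 ∈ X) ∧ ∃ p, p ∈ Set.Ioo l r \ X then h.2.choose else (l + r) / 2

lemma cfun_spec {X : Set ℝ} {l r : ℝ} (hlr : l < r) (hgen : ∃ p, p ∈ Set.Ioo l r \ X) :
    cfun X l r ∈ Set.Ioo l r \ X := by
  unfold cfun
  split_ifs with h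
  · exact h.2.choose_spec
  · have hm : (l + r) / 2 ∉ X := fun hm => h ⟨hm, hgen⟩
    exact ⟨⟨by linarith, by linarith⟩, hm⟩

lemma cfun_mid_or {X : Set ℝ} (l r : ℝ) :
    cfun X l r = (l + r) / 2 ∨ (l + r) / 2 ∈ X := by
  unfold cfun
  split_ifs with h
  · exact Or.inr h.1
  · exact Or.inl rfl

/-- Let `X ⊆ [0,1]` be nonempty and closed and let `δ > 0`.  Then there are a closed set
`Y ⊆ X` which is a finite union of closed intervals `[a, b]` with endpoints in `X`
(singletons allowed), and a continuous map `h : X → Y` with `h(y) = y` for `y ∈ Y` and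
`|h(x) − x| < 2δ` for all `x ∈ X`. -/
theorem exists_interval_retract (X : Set ℝ) (hX1 : X ⊆ Set.Icc 0 1)
    (hne : X.Nonempty) (hcl : IsClosed X) (δ : ℝ) (hδ : 0 < δ) :
    ∃ Y : Set ℝ, Y ⊆ X ∧ IsClosed Y ∧
      (∃ s : Finset (ℝ × ℝ), (∀ p ∈ s, p.1 ∈ X ∧ p.2 ∈ X ∧ p.1 ≤ p.2) ∧
        Y = ⋃ p ∈ s, Set.Icc p.1 p.2) ∧
      ∃ h : C(X, Y),
        (∀ y : X, (y : ℝ) ∈ Y → ((h y : ℝ) = (y : ℝ))) ∧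
        (∀ x : X, |(h x : ℝ) - (x : ℝ)| < 2 * δ) := by
  classical
  have hK : IsCompact X := isCompact_Icc.of_isClosed_subset hcl hX1
  -- finite δ-net
  obtain ⟨F, hF⟩ := hK.elim_finite_subcover (fun t : X => Metric.ball (t : ℝ) δ)
      (fun _ => Metric.isOpen_ball) (fun x hx => mem_iUnion.2 ⟨⟨x, hx⟩, by simpa using hδ⟩)
  set m₀ := sInf X with hm₀def
  set m₁ := sSup X with hm₁def
  have hm₀X : m₀ ∈ X := hK.sInf_mem hne
  have hm₁X : m₁ ∈ X := hK.sSup_mem hne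
  have hlbX : ∀ x ∈ X, m₀ ≤ x := fun x hx => csInf_le ⟨0, fun y hy => (hX1 hy).1⟩ hx
  have hubX : ∀ x ∈ X, x ≤ m₁ := fun x hx => le_csSup ⟨1, fun y hy => (hX1 hy).2⟩ hx
  set T : Finset ℝ := F.image (Subtype.val) ∪ {m₀, m₁} with hTdef
  have hTX : ∀ t ∈ T, t ∈ X := by
    intro t ht
    rw [hTdef] at ht
    rcases Finset.mem_union.1 ht with h | h
    · obtain ⟨u, _, rfl⟩ := Finset.mem_image.1 h
      exact u.2
    · rcases Finset.mem_insert.1 h with rfl | h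
      · exact hm₀X
      · rw [Finset.mem_singleton.1 h]; exact hm₁X
  have hTnet : ∀ x ∈ X, ∃ t ∈ T, |x - t| < δ := by
    intro x hx
    obtain ⟨u, hu, hxu⟩ := mem_iUnion₂.1 (hF hx)
    refine ⟨(u : ℝ), ?_, ?_⟩
    · rw [hTdef]
      exact Finset.mem_union.2 (Or.inl (Finset.mem_image.2 ⟨u, hu, rfl⟩))
    · simpa [Real.dist_eq] using hxu
  set s : Finset (ℝ × ℝ) := T.image (fun t => (Afun X t, Bfun X t)) with hsdef
  set Y : Set ℝ := ⋃ p ∈ s, Set.Icc p.1 p.2 with hYdef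
  have hmemY : ∀ z, z ∈ Y ↔ ∃ t ∈ T, z ∈ Icc (Afun X t) (Bfun X t) := by
    intro z
    simp only [hYdef, hsdef, mem_iUnion, Finset.mem_image, exists_prop]
    constructor
    · rintro ⟨p, ⟨t, ht, rfl⟩, hz⟩
      exact ⟨t, ht, hz⟩
    · rintro ⟨t, ht, hz⟩
      exact ⟨(Afun X t, Bfun X t), ⟨t, ht, rfl⟩, hz⟩
  have hYX : Y ⊆ X := by
    intro z hz
    obtain ⟨t, ht, hz⟩ := (hmemY z).1 hz
    exact Icc_AB_subset hX1 hcl (hTX t ht) hz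
  have hYcl : IsClosed Y := by
    rw [hYdef]
    exact Set.Finite.isClosed_biUnion s.finite_toSet (fun _ _ => isClosed_Icc)
  have hYK : IsCompact Y := isCompact_Icc.of_isClosed_subset hYcl (hYX.trans hX1)
  have hTY : ∀ t ∈ T, t ∈ Y := fun t ht => (hmemY t).2
    ⟨t, ht, Afun_le hX1 (hTX t ht), le_Bfun hX1 (hTX t ht)⟩
  have hm₀Y : m₀ ∈ Y := hTY m₀ (by simp [hTdef])
  have hm₁Y : m₁ ∈ Y := hTY m₁ (by simp [hTdef])
  -- the retraction data
  set lf : ℝ → ℝ := fun x => sSup (Y ∩ Iic x) with hlfdef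
  set rf : ℝ → ℝ := fun x => sInf (Y ∩ Ici x) with hrfdef
  set cf : ℝ → ℝ := fun x => cfun X (lf x) (rf x) with hcfdef
  set f : ℝ → ℝ := fun x => if x ∈ Y then x else if x < cf x then lf x else rf x with hfdef
  have hlf : ∀ x, m₀ ≤ x → lf x ∈ Y ∧ lf x ≤ x ∧ ∀ y ∈ Y, y ≤ x → y ≤ lf x := by
    intro x hx
    have hne' : (Y ∩ Iic x).Nonempty := ⟨m₀, hm₀Y, hx⟩
    have hKc : IsCompact (Y ∩ Iic x) := hYK.inter_right isClosed_Iic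
    have hmem := hKc.sSup_mem hne'
    exact ⟨hmem.1, hmem.2, fun y hy hyx => le_csSup hKc.bddAbove ⟨hy, hyx⟩⟩
  have hrf : ∀ x, x ≤ m₁ → rf x ∈ Y ∧ x ≤ rf x ∧ ∀ y ∈ Y, x ≤ y → rf x ≤ y := by
    intro x hx
    have hne' : (Y ∩ Ici x).Nonempty := ⟨m₁, hm₁Y, hx⟩
    have hKc : IsCompact (Y ∩ Ici x) := hYK.inter_right isClosed_Ici
    have hmem := hKc.sInf_mem hne'
    exact ⟨hmem.1, hmem.2, fun y hy hyx => csInf_le hKc.bddBelow ⟨hy, hyx⟩⟩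
  have hlf_lt : ∀ x, m₀ ≤ x → x ∉ Y → lf x < x := by
    intro x hx hxY
    rcases eq_or_lt_of_le (hlf x hx).2.1 with h | h
    · exact absurd (h ▸ (hlf x hx).1) hxY
    · exact h
  have hrf_gt : ∀ x, x ≤ m₁ → x ∉ Y → x < rf x := by
    intro x hx hxY
    rcases eq_or_lt_of_le (hrf x hx).2.1 with h | h
    · exact absurd (h ▸ (hrf x hx).1) hxY
    · exact h
  have hgap : ∀ x, m₀ ≤ x → x ≤ m₁ → ∀ y ∈ Y, y ∉ Ioo (lf x) (rf x) := by
    intro x hx0 hx1 y hy hyIoo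
    rcases le_total y x with h | h
    · exact absurd ((hlf x hx0).2.2 y hy h) (not_le.2 hyIoo.1)
    · exact absurd ((hrf x hx1).2.2 y hy h) (not_le.2 hyIoo.2)
  have hlfB : ∀ x, m₀ ≤ x → x ≤ m₁ → x ∉ Y → ∃ t ∈ T, lf x = Bfun X t := by
    intro x hx0 hx1 hxY
    obtain ⟨t, ht, hA, hB⟩ := (hmemY _).1 (hlf x hx0).1
    refine ⟨t, ht, ?_⟩
    rcases le_or_gt (Bfun X t) x with h | h
    · have hBY : Bfun X t ∈ Y := (hmemY _).2 ⟨t, ht,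
        ⟨le_trans (Afun_le hX1 (hTX t ht)) (le_Bfun hX1 (hTX t ht)), le_refl _⟩⟩
      exact le_antisymm hB ((hlf x hx0).2.2 _ hBY h)
    · exact absurd ((hmemY x).2 ⟨t, ht, ⟨le_trans hA (hlf x hx0).2.1, h.le⟩⟩) hxY
  have hrfA : ∀ x, m₀ ≤ x → x ≤ m₁ → x ∉ Y → ∃ t ∈ T, rf x = Afun X t := by
    intro x hx0 hx1 hxY
    obtain ⟨t, ht, hA, hB⟩ := (hmemY _).1 (hrf x hx1).1
    refine ⟨t, ht, ?_⟩
    rcases le_or_gt x (Afun X t) with h | h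
    · have hAY : Afun X t ∈ Y := (hmemY _).2 ⟨t, ht,
        ⟨le_refl _, le_trans (Afun_le hX1 (hTX t ht)) (le_Bfun hX1 (hTX t ht))⟩⟩
      exact le_antisymm ((hrf x hx1).2.2 _ hAY h) hA
    · exact absurd ((hmemY x).2 ⟨t, ht, ⟨h.le, le_trans (hrf x hx1).2.1 hB⟩⟩) hxY
  have hgen : ∀ x, m₀ ≤ x → x ≤ m₁ → x ∉ Y → ∃ p, p ∈ Ioo (lf x) (rf x) \ X := by
    intro x hx0 hx1 hxY
    by_contra hcon
    push_neg at hcon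
    have hlr : lf x < rf x := lt_trans (hlf_lt x hx0 hxY) (hrf_gt x hx1 hxY)
    have hsub : Ioo (lf x) (rf x) ⊆ X := by
      intro p hp
      by_contra hpX
      exact (hcon p) ⟨hp, hpX⟩
    obtain ⟨t, ht, hA, hB⟩ := (hmemY _).1 (hlf x hx0).1
    have htX := hTX t ht
    have hlB : lf x = Bfun X t := by
      rcases eq_or_lt_of_le hB with h | h
      · exact h
      · exfalso
        set y := min (Bfun X t) ((lf x + rf x) / 2) with hy
        have hyY : y ∈ Y := (hmemY _).2 ⟨t, ht,
          ⟨le_trans hA (le_trans (le_min (le_of_lt h) (by linarith)) (le_refl _)), min_le_left _ _⟩⟩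
        have hyIoo : y ∈ Ioo (lf x) (rf x) :=
          ⟨lt_min h (by linarith), lt_of_le_of_lt (min_le_right _ _) (by linarith)⟩
        exact hgap x hx0 hx1 y hyY hyIoo
    have hmid : (lf x + rf x) / 2 ∈ {s | Icc t s ⊆ X} := by
      intro u hu
      rcases le_or_gt u (lf x) with h | h
      · exact Icc_AB_subset hX1 hcl htX ⟨le_trans (Afun_le hX1 htX) hu.1, hlB ▸ h⟩
      · exact hsub ⟨h, lt_of_le_of_lt hu.2 (by linarith)⟩
    have hBge : (lf x + rf x) / 2 ≤ Bfun X t := le_csSup (bddAbove_Bset hX1 htX) hmid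
    rw [← hlB] at hBge
    linarith
  have hclose : ∀ x, m₀ ≤ x → x ≤ m₁ → ∀ w, lf x < w → w < rf x → w ∈ X →
      w - lf x < δ ∨ rf x - w < δ := by
    intro x hx0 hx1 w hw1 hw2 hwX
    obtain ⟨t, ht, hwt⟩ := hTnet w hwX
    have htY : t ∈ Y := hTY t ht
    have hnotIoo := hgap x hx0 hx1 t htY
    have habs := abs_lt.1 hwt
    rcases le_or_gt t (lf x) with h | h
    · left; linarith
    · right
      have hrt : rf x ≤ t := by
        by_contra hrt
        exact hnotIoo ⟨h, not_le.1 hrt⟩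
      linarith
  have hbound : ∀ x ∈ X, |f x - x| < 2 * δ := by
    intro x hx
    by_cases hxY : x ∈ Y
    · rw [hfdef]
      simp only [if_pos hxY, sub_self, abs_zero]
      linarith
    · have hx0 := hlbX x hx
      have hx1 := hubX x hx
      have hllt := hlf_lt x hx0 hxY
      have hrgt := hrf_gt x hx1 hxY
      have hlr : lf x < rf x := lt_trans hllt hrgt
      have hc := cfun_spec hlr (hgen x hx0 hx1 hxY)
      have hcf : cf x ∈ Ioo (lf x) (rf x) \ X := hc
      have hxc : x ≠ cf x := fun h => hcf.2 (h ▸ hx)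
      have hnearx := hclose x hx0 hx1 x hllt hrgt hx
      have hkey : rf x - lf x < 2 * δ ∨ cf x = (lf x + rf x) / 2 := by
        rcases cfun_mid_or (X := X) (lf x) (rf x) with h | h
        · exact Or.inr h
        · left
          rcases hclose x hx0 hx1 ((lf x + rf x) / 2) (by linarith) (by linarith) h with
            h1 | h1 <;> linarith
      rw [hfdef]
      simp only [if_neg hxY]
      by_cases hxlt : x < cf x
      · rw [if_pos hxlt, abs_sub_comm, abs_of_nonneg (by linarith : (0:ℝ) ≤ x - lf x)]
        rcases hnearx with h1 | h1
        · linarith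
        · rcases hkey with h2 | h2
          · linarith
          · rw [h2] at hxlt; linarith
      · have hclt : cf x < x := lt_of_le_of_ne (not_lt.1 hxlt) (Ne.symm hxc)
        rw [if_neg hxlt, abs_of_nonneg (by linarith : (0:ℝ) ≤ rf x - x)]
        rcases hnearx with h1 | h1
        · rcases hkey with h2 | h2
          · linarith
          · rw [h2] at hclt; linarith
        · linarith
  have hconst : ∀ x, m₀ ≤ x → x ≤ m₁ → x ∉ Y →
      ∀ z ∈ Ioo (lf x) (rf x), lf z = lf x ∧ rf z = rf x ∧ z ∉ Y := by
    intro x hx0 hx1 hxY z hz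
    have hzY : z ∉ Y := fun h => hgap x hx0 hx1 z h hz
    refine ⟨?_, ?_, hzY⟩
    · have hgr : IsGreatest (Y ∩ Iic z) (lf x) := by
        constructor
        · exact ⟨(hlf x hx0).1, hz.1.le⟩
        · rintro y ⟨hyY, hyz⟩
          by_contra hyl
          exact hgap x hx0 hx1 y hyY ⟨not_le.1 hyl, lt_of_le_of_lt hyz hz.2⟩
      rw [hlfdef]
      exact hgr.csSup_eq
    · have hls : IsLeast (Y ∩ Ici z) (rf x) := by
        constructor
        · exact ⟨(hrf x hx1).1, hz.2.le⟩
        · rintro y ⟨hyY, hyz⟩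
          by_contra hyl
          exact hgap x hx0 hx1 y hyY ⟨lt_of_lt_of_le hz.1 hyz, not_le.1 hyl⟩
      rw [hrfdef]
      exact hls.csInf_eq
  have hfl : ∀ x, m₀ ≤ x → x ≤ m₁ → x ∉ Y → ∀ z ∈ Ioo (lf x) (cf x), f z = lf x := by
    intro x hx0 hx1 hxY z hz
    have hlr : lf x < rf x := lt_trans (hlf_lt x hx0 hxY) (hrf_gt x hx1 hxY)
    have hc := cfun_spec hlr (hgen x hx0 hx1 hxY)
    have hz' : z ∈ Ioo (lf x) (rf x) := ⟨hz.1, hz.2.trans hc.1.2⟩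
    obtain ⟨hl, hr, hzY⟩ := hconst x hx0 hx1 hxY z hz'
    have hcz : cf z = cf x := by
      rw [hcfdef]
      simp only
      rw [hl, hr]
    rw [hfdef]
    simp only [if_neg hzY]
    rw [hcz, if_pos hz.2]
    exact hl
  have hfr : ∀ x, m₀ ≤ x → x ≤ m₁ → x ∉ Y → ∀ z ∈ Ioo (cf x) (rf x), f z = rf x := by
    intro x hx0 hx1 hxY z hz
    have hlr : lf x < rf x := lt_trans (hlf_lt x hx0 hxY) (hrf_gt x hx1 hxY)
    have hc := cfun_spec hlr (hgen x hx0 hx1 hxY)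
    have hz' : z ∈ Ioo (lf x) (rf x) := ⟨hc.1.1.trans hz.1, hz.2⟩
    obtain ⟨hl, hr, hzY⟩ := hconst x hx0 hx1 hxY z hz'
    have hcz : cf z = cf x := by
      rw [hcfdef]
      simp only
      rw [hl, hr]
    rw [hfdef]
    simp only [if_neg hzY]
    rw [hcz, if_neg (not_lt.2 hz.1.le)]
    exact hr
  have hfixY : ∀ x ∈ Y, f x = x := by
    intro x hx
    rw [hfdef]
    simp only [if_pos hx]
  have hfX : ∀ x ∈ X, f x ∈ Y := by
    intro x hx
    by_cases hxY : x ∈ Y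
    · rw [hfixY x hxY]; exact hxY
    · rw [hfdef]
      simp only [if_neg hxY]
      split_ifs
      · exact (hlf x (hlbX x hx)).1
      · exact (hrf x (hubX x hx)).1
  have hcont : ContinuousOn f X := by
    intro x0 hx0X
    by_cases hx0Y : x0 ∈ Y
    · rw [Metric.continuousWithinAt_iff]
      intro ε hε
      set D : Finset ℝ := (T ×ˢ T).image (fun q => cfun X (Bfun X q.1) (Afun X q.2)) with hDdef
      set S : Finset ℝ := D.filter (fun d => d ≠ x0) with hSdef
      obtain ⟨ρ, hρ0, hρε, hρD⟩ :
          ∃ ρ, 0 < ρ ∧ ρ ≤ ε ∧ ∀ d ∈ D, d ≠ x0 → ρ ≤ |d - x0| := by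
        by_cases hS : S.Nonempty
        · refine ⟨min ε (S.inf' hS fun d => |d - x0|), ?_, min_le_left _ _, ?_⟩
          · refine lt_min hε ?_
            rw [Finset.lt_inf'_iff]
            intro d hd
            exact abs_pos.2 (sub_ne_zero.2 (by simpa [hSdef] using (Finset.mem_filter.1 hd).2))
          · intro d hd hdx
            exact le_trans (min_le_right _ _)
              (Finset.inf'_le _ (Finset.mem_filter.2 ⟨hd, by simpa [hSdef] using hdx⟩))
        · exact ⟨ε, hε, le_refl _,
            fun d hd hdx => absurd ⟨d, Finset.mem_filter.2 ⟨hd, by simpa [hSdef] using hdx⟩⟩ hS⟩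
      refine ⟨ρ, hρ0, fun x hxX hdist => ?_⟩
      rw [Real.dist_eq] at hdist ⊢
      rw [hfixY x0 hx0Y]
      by_cases hxY : x ∈ Y
      · rw [hfixY x hxY]
        exact lt_of_lt_of_le hdist hρε
      · have hx0' := hlbX x hxX
        have hx1' := hubX x hxX
        have hllt := hlf_lt x hx0' hxY
        have hrgt := hrf_gt x hx1' hxY
        have hlr : lf x < rf x := lt_trans hllt hrgt
        have hc : cf x ∈ Ioo (lf x) (rf x) \ X := cfun_spec hlr (hgen x hx0' hx1' hxY)
        have hc1 : lf x < cf x := hc.1.1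
        have hc2 : cf x < rf x := hc.1.2
        have hcD : cf x ∈ D := by
          obtain ⟨t, ht, hlB⟩ := hlfB x hx0' hx1' hxY
          obtain ⟨t', ht', hrA⟩ := hrfA x hx0' hx1' hxY
          rw [hDdef]
          refine Finset.mem_image.2 ⟨(t, t'), Finset.mem_product.2 ⟨ht, ht'⟩, ?_⟩
          rw [hcfdef]
          simp only
          rw [hlB, hrA]
        have hcx0 : cf x ≠ x0 := fun h => hc.2 (h ▸ hx0X)
        have hρc := hρD _ hcD hcx0
        have habs := abs_lt.1 hdist
        rw [hfdef]
        simp only [if_neg hxY]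
        rcases lt_trichotomy x x0 with hlt | heq | hgt
        · have hrx0 : rf x ≤ x0 := (hrf x hx1').2.2 x0 hx0Y hlt.le
          by_cases hxc : x < cf x
          · exfalso
            rw [abs_of_nonpos (by linarith : cf x - x0 ≤ 0)] at hρc
            linarith
          · rw [if_neg hxc, abs_of_nonpos (by linarith : rf x - x0 ≤ 0)]
            linarith
        · exact absurd (heq ▸ hx0Y) hxY
        · have hlx0 : x0 ≤ lf x := (hlf x hx0').2.2 x0 hx0Y hgt.le
          by_cases hxc : x < cf x
          · rw [if_pos hxc, abs_of_nonneg (by linarith : (0:ℝ) ≤ lf x - x0)]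
            linarith
          · exfalso
            have hcle : cf x ≤ x := not_lt.1 hxc
            rw [abs_of_nonneg (by linarith : (0:ℝ) ≤ cf x - x0)] at hρc
            linarith
    · have hx0' := hlbX x0 hx0X
      have hx1' := hubX x0 hx0X
      have hllt := hlf_lt x0 hx0' hx0Y
      have hrgt := hrf_gt x0 hx1' hx0Y
      have hlr : lf x0 < rf x0 := lt_trans hllt hrgt
      have hc : cf x0 ∈ Ioo (lf x0) (rf x0) \ X := cfun_spec hlr (hgen x0 hx0' hx1' hx0Y)
      have hx0c : x0 ≠ cf x0 := fun h => hc.2 (by rw [← h]; exact hx0X)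
      rcases lt_or_gt_of_ne hx0c with hltc | hgtc
      · have hmem : Ioo (lf x0) (cf x0) ∈ nhds x0 := Ioo_mem_nhds hllt hltc
        have hev : f =ᶠ[nhds x0] (fun _ => lf x0) :=
          Filter.eventuallyEq_of_mem hmem (hfl x0 hx0' hx1' hx0Y)
        exact (continuousAt_const.congr hev.symm).continuousWithinAt
      · have hmem : Ioo (cf x0) (rf x0) ∈ nhds x0 := Ioo_mem_nhds hgtc hrgt
        have hev : f =ᶠ[nhds x0] (fun _ => rf x0) :=
          Filter.eventuallyEq_of_mem hmem (hfr x0 hx0' hx1' hx0Y)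
        exact (continuousAt_const.congr hev.symm).continuousWithinAt
  refine ⟨Y, hYX, hYcl, ⟨s, ?_, hYdef⟩, ?_⟩
  · intro p hp
    rw [hsdef] at hp
    obtain ⟨t, ht, rfl⟩ := Finset.mem_image.1 hp
    exact ⟨Afun_mem hX1 hcl (hTX t ht), Bfun_mem hX1 hcl (hTX t ht),
      le_trans (Afun_le hX1 (hTX t ht)) (le_Bfun hX1 (hTX t ht))⟩
  · refine ⟨⟨fun x => ⟨f x, hfX x x.2⟩, ?_⟩, ?_, ?_⟩
    · exact (hcont.restrict).subtype_mk _
    · intro y hy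
      exact hfixY y hy
    · intro x
      exact hbound x x.2
end

section
/- Let X ⊆ [0,1] be a nonempty closed set, let ε > 0, let r, n ∈ ℕ with r ≥ 1, and let a₁, …, aₙ ∈ C(X, M_r(ℂ)). Then there exist a closed subset Y ⊆ X which is a finite union of closed intervals (possibly degenerate), and a continuous map h : X → Y with h(y) = y for all y ∈ Y, such that the map ψ : C(Y, M_r(ℂ)) → C(X, M_r(ℂ)) defined by ψ(b) = b ∘ h is an injective unital *-homomorphism satisfying ‖ψ(a_l|_Y) − a_l‖ < ε (supremum norm) for l = 1, …, n. -/
/-!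
A point `c ∉ X` cuts `X` into two relatively clopen pieces, so retractions of the pieces glue.
Sweeping `X` from the left, cut at the first gap beyond `a + δ / 2`, where `a` bounds the rest of
`X` from below: the piece before the cut either lies within `δ` of one of its points, or contains
a closed interval which it clamps onto moving no point by more than `δ`. After finitely many cuts
this gives a retraction `h` of `X` onto a finite union of intervals, uniformly close to the
identity. Composition with `h` is then a unital *-homomorphism, injective because `h` is onto, and
by uniform continuity of the finitely many `aₗ` it moves each of them by less than `ε`.
-/

open Set
open scoped Matrix.Norms.L2Operator

def IsFiniteIntervalUnion (Y : Set ℝ) : Prop :=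
  ∃ s : Finset (ℝ × ℝ), (∀ p ∈ s, p.1 ≤ p.2) ∧ Y = ⋃ p ∈ s, Icc p.1 p.2

namespace IsFiniteIntervalUnion

theorem empty : IsFiniteIntervalUnion ∅ :=
  ⟨∅, by simp, by simp⟩

theorem Icc {α β : ℝ} (h : α ≤ β) : IsFiniteIntervalUnion (Icc α β) :=
  ⟨{(α, β)}, by simpa using h, by simp⟩

theorem union {Y₁ Y₂ : Set ℝ} (h₁ : IsFiniteIntervalUnion Y₁) (h₂ : IsFiniteIntervalUnion Y₂) :
    IsFiniteIntervalUnion (Y₁ ∪ Y₂) := by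
  obtain ⟨s₁, hs₁, rfl⟩ := h₁
  obtain ⟨s₂, hs₂, rfl⟩ := h₂
  refine ⟨s₁ ∪ s₂, fun p hp => ?_, Finset.set_biUnion_union s₁ s₂ _ |>.symm⟩
  rcases Finset.mem_union.mp hp with hp | hp
  exacts [hs₁ p hp, hs₂ p hp]

theorem isClosed {Y : Set ℝ} (h : IsFiniteIntervalUnion Y) : IsClosed Y := by
  obtain ⟨s, -, rfl⟩ := h
  exact s.finite_toSet.isClosed_biUnion fun _ _ => isClosed_Icc

end IsFiniteIntervalUnion

def HasIntervalRetraction (δ : ℝ) (X : Set ℝ) : Prop :=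
  ∃ Y ⊆ X, IsFiniteIntervalUnion Y ∧ ∃ f : ℝ → ℝ,
    ContinuousOn f X ∧ MapsTo f X Y ∧ EqOn f id Y ∧ ∀ x ∈ X, dist (f x) x ≤ δ

namespace HasIntervalRetraction

variable {δ : ℝ} {X : Set ℝ}

theorem empty : HasIntervalRetraction δ ∅ :=
  ⟨∅, subset_rfl, .empty, id, continuousOn_empty _, mapsTo_empty _ _, eqOn_empty _ _, by simp⟩

theorem of_Icc_subset (hδ : 0 ≤ δ) {α β : ℝ} (hαβ : α ≤ β) (hsub : Icc α β ⊆ X)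
    (hX : X ⊆ Icc (α - δ) (β + δ)) : HasIntervalRetraction δ X := by
  refine ⟨Icc α β, hsub, .Icc hαβ, fun x => max α (min x β),
    (continuous_const.max (continuous_id.min continuous_const)).continuousOn,
    fun x _ => ⟨le_max_left _ _, max_le hαβ (min_le_right _ _)⟩,
    fun y hy => by simp [hy.1, hy.2], fun x hx => ?_⟩
  obtain ⟨hlo, hhi⟩ := hX hx
  have hle : max α (min x β) ≤ x + δ := max_le (by linarith) ((min_le_left _ _).trans (by linarith))
  have hge : x - δ ≤ max α (min x β) := le_max_of_le_right (le_min (by linarith) (by linarith))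
  rw [Real.dist_eq, abs_sub_le_iff]
  constructor <;> linarith

theorem of_subset_Icc_add (hδ : 0 ≤ δ) {a : ℝ} (hX : X ⊆ Icc a (a + δ)) :
    HasIntervalRetraction δ X := by
  rcases X.eq_empty_or_nonempty with rfl | ⟨p, hp⟩
  · exact empty
  refine of_Icc_subset hδ le_rfl (by simpa using hp) fun x hx => ?_
  obtain ⟨hx₁, hx₂⟩ := hX hx
  obtain ⟨hp₁, hp₂⟩ := hX hp
  constructor <;> linarith

theorem of_cut {c : ℝ} (hc : c ∉ X) (h₁ : HasIntervalRetraction δ (X ∩ Iic c))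
    (h₂ : HasIntervalRetraction δ (X ∩ Ici c)) : HasIntervalRetraction δ X := by
  obtain ⟨Y₁, hY₁X, hY₁, f₁, hf₁, hmaps₁, hfix₁, hdist₁⟩ := h₁
  obtain ⟨Y₂, hY₂X, hY₂, f₂, hf₂, hmaps₂, hfix₂, hdist₂⟩ := h₂
  have hne : ∀ x ∈ X, x ≠ c := fun x hx hxc => hc (hxc ▸ hx)
  have hgt : ∀ x ∈ X, ¬x ≤ c → x ∈ X ∩ Ici c := fun x hx hxc => ⟨hx, (not_le.mp hxc).le⟩
  refine ⟨Y₁ ∪ Y₂, union_subset (hY₁X.trans inter_subset_left) (hY₂X.trans inter_subset_left),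
    hY₁.union hY₂, fun x => if x ≤ c then f₁ x else f₂ x, ?_, fun x hx => ?_, ?_, fun x hx => ?_⟩
  · refine ContinuousOn.if (fun x hx => ?_) ?_ ?_
    · exact absurd (frontier_Iic_subset c hx.2) (hne x hx.1)
    · rwa [show {x | x ≤ c} = Iic c from rfl, closure_Iic]
    · rwa [show {x | ¬x ≤ c} = Ioi c by ext; simp, closure_Ioi]
  · dsimp only
    split_ifs with hxc
    exacts [.inl (hmaps₁ ⟨hx, hxc⟩), .inr (hmaps₂ (hgt x hx hxc))]
  · rintro y (hy | hy)
    · have hyc : y ≤ c := (hY₁X hy).2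
      simp [hyc, hfix₁ hy]
    · have hyc : ¬y ≤ c := fun h => hne y (hY₂X hy).1 (le_antisymm h (hY₂X hy).2)
      simp [hyc, hfix₂ hy]
  · dsimp only
    split_ifs with hxc
    exacts [hdist₁ x ⟨hx, hxc⟩, hdist₂ x (hgt x hx hxc)]

theorem exists_cut (hX : IsClosed X) (hδ : 0 < δ) {a b : ℝ} (hXab : X ⊆ Icc a b) :
    ∃ c ∉ X, a + δ / 2 ≤ c ∧ HasIntervalRetraction δ (X ∩ Iic c) := by
  set S := Ici (a + δ / 2) \ X
  have hS : S.Nonempty := ⟨max (a + δ / 2) (b + 1), mem_Ici.mpr (le_max_left _ _), fun h => by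
    linarith [(hXab h).2, le_max_right (a + δ / 2) (b + 1)]⟩
  have hSbdd : BddBelow S := ⟨a + δ / 2, fun _ h => h.1⟩
  set β := sInf S
  have hIco : Ico (a + δ / 2) β ⊆ X := fun t ht =>
    by_contra fun htX => (csInf_le hSbdd ⟨ht.1, htX⟩).not_gt ht.2
  obtain ⟨c, ⟨hac, hcX⟩, hcβ⟩ := exists_lt_of_csInf_lt hS (lt_add_of_pos_right β (half_pos hδ))
  have hβc : β ≤ c := csInf_le hSbdd ⟨hac, hcX⟩
  refine ⟨c, hcX, hac, ?_⟩
  rcases le_or_gt β (a + δ / 2) with hβ | hβ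
  · refine of_subset_Icc_add hδ.le fun x hx => ⟨(hXab hx.1).1, ?_⟩
    linarith [mem_Iic.mp hx.2]
  · have hIcc : Icc (a + δ / 2) β ⊆ X := by
      rw [← closure_Ico hβ.ne]
      exact closure_minimal hIco hX
    refine of_Icc_subset hδ.le hβ.le (fun x hx => ⟨hIcc hx, hx.2.trans hβc⟩) fun x hx => ?_
    constructor <;> linarith [(hXab hx.1).1, mem_Iic.mp hx.2]

theorem of_subset_Icc_add_mul (hX : IsClosed X) (hδ : 0 < δ) (k : ℕ) {a : ℝ}
    (hXa : X ⊆ Icc a (a + k * (δ / 2))) : HasIntervalRetraction δ X := by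
  induction k generalizing X a with
  | zero =>
    refine of_subset_Icc_add hδ.le fun x hx => ⟨(hXa hx).1, ?_⟩
    linarith [(hXa hx).2]
  | succ k ih =>
    obtain ⟨c, hcX, hac, hleft⟩ := exists_cut hX hδ hXa
    refine of_cut hcX hleft (ih (hX.inter isClosed_Ici) fun x hx => ⟨hx.2, ?_⟩)
    have hxa := (hXa hx.1).2
    push_cast at hxa
    linarith

theorem _root_.IsCompact.hasIntervalRetraction (hX : IsCompact X) (hδ : 0 < δ) :
    HasIntervalRetraction δ X := by
  obtain ⟨a, ha⟩ := hX.bddBelow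
  obtain ⟨b, hb⟩ := hX.bddAbove
  obtain ⟨k, hk⟩ := exists_nat_gt ((b - a) / (δ / 2))
  rw [div_lt_iff₀ (half_pos hδ)] at hk
  exact of_subset_Icc_add_mul hX.isClosed hδ k fun x hx => ⟨ha hx, by linarith [hb hx]⟩

end HasIntervalRetraction

theorem exists_interval_subalgebra_approx_general (X : Set ℝ) (hX1 : X ⊆ Set.Icc 0 1)
    (hcl : IsClosed X) (ε : ℝ) (hε : 0 < ε) (r n : ℕ)
    (a : Fin n → C(X, Matrix (Fin r) (Fin r) ℂ)) :
    ∃ (Y : Set ℝ) (hYX : Y ⊆ X), IsClosed Y ∧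
      (∃ s : Finset (ℝ × ℝ), (∀ p ∈ s, p.1 ≤ p.2) ∧ Y = ⋃ p ∈ s, Set.Icc p.1 p.2) ∧
      ∃ h : C(X, Y),
        (∀ y : X, (y : ℝ) ∈ Y → ((h y : ℝ) = (y : ℝ))) ∧
        Function.Injective
          (fun b : C(Y, Matrix (Fin r) (Fin r) ℂ) => b.comp h) ∧
        ((1 : C(Y, Matrix (Fin r) (Fin r) ℂ)).comp h = 1) ∧
        (∀ b₁ b₂ : C(Y, Matrix (Fin r) (Fin r) ℂ),
          (b₁ * b₂).comp h = b₁.comp h * b₂.comp h) ∧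
        (∀ b₁ b₂ : C(Y, Matrix (Fin r) (Fin r) ℂ),
          (b₁ + b₂).comp h = b₁.comp h + b₂.comp h) ∧
        (∀ (μ : ℂ) (b : C(Y, Matrix (Fin r) (Fin r) ℂ)),
          (μ • b).comp h = μ • b.comp h) ∧
        (∀ b : C(Y, Matrix (Fin r) (Fin r) ℂ), (star b).comp h = star (b.comp h)) ∧
        (∀ l : Fin n,
          (⨆ x : X,
            ‖(((a l).comp ⟨Set.inclusion hYX, continuous_inclusion hYX⟩).comp h) x
              - (a l) x‖) < ε) := by
  have hXc : IsCompact X := isCompact_Icc.of_isClosed_subset hcl hX1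
  have : CompactSpace X := isCompact_iff_compactSpace.mp hXc
  obtain ⟨δ, hδ, hmod⟩ := Metric.uniformEquicontinuous_iff.mp
    (CompactSpace.uniformEquicontinuous_of_equicontinuous
      (equicontinuous_finite.mpr fun l => (a l).continuous)) (ε / 2) (half_pos hε)
  obtain ⟨Y, hYX, hY, f, hf, hmaps, hfix, hdist⟩ := hXc.hasIntervalRetraction (half_pos hδ)
  let h : C(X, Y) := ⟨hmaps.restrict f X Y, hf.mapsToRestrict hmaps⟩
  have hsurj : Function.Surjective h := fun y => ⟨⟨y, hYX y.2⟩, Subtype.ext (hfix y.2)⟩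
  refine ⟨Y, hYX, hY.isClosed, hY, h, fun y hy => hfix hy,
    fun b₁ b₂ hb => ContinuousMap.coe_injective (hsurj.injective_comp_right (congrArg (⇑) hb)),
    rfl, fun _ _ => rfl, fun _ _ => rfl, fun _ _ => rfl, fun _ => rfl, fun l => ?_⟩
  refine (Real.iSup_le (fun x => ?_) (half_pos hε).le).trans_lt (half_lt_self hε)
  rw [← dist_eq_norm]
  exact (hmod _ _ ((hdist x x.2).trans_lt (half_lt_self hδ)) l).le

/-- Let `X ⊆ [0,1]` be nonempty and closed, `ε > 0`, `r ≥ 1`, and `a₁, …, aₙ ∈ C(X, M_r(ℂ))`.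
Then there are a closed set `Y ⊆ X` which is a finite union of closed intervals (possibly
degenerate) and a continuous retraction `h : X → Y` such that `ψ : C(Y, M_r(ℂ)) → C(X, M_r(ℂ))`,
`ψ(b) = b ∘ h`, is an injective unital *-homomorphism with `‖ψ(aₗ|_Y) − aₗ‖ < ε` in the
supremum norm, for `l = 1, …, n`. -/
theorem exists_interval_subalgebra_approx (X : Set ℝ) (hX1 : X ⊆ Set.Icc 0 1)
    (hne : X.Nonempty) (hcl : IsClosed X) (ε : ℝ) (hε : 0 < ε) (r n : ℕ) (hr : 1 ≤ r)
    (a : Fin n → C(X, Matrix (Fin r) (Fin r) ℂ)) :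
    ∃ (Y : Set ℝ) (hYX : Y ⊆ X), IsClosed Y ∧
      (∃ s : Finset (ℝ × ℝ), (∀ p ∈ s, p.1 ≤ p.2) ∧ Y = ⋃ p ∈ s, Set.Icc p.1 p.2) ∧
      ∃ h : C(X, Y),
        (∀ y : X, (y : ℝ) ∈ Y → ((h y : ℝ) = (y : ℝ))) ∧
        Function.Injective
          (fun b : C(Y, Matrix (Fin r) (Fin r) ℂ) => b.comp h) ∧
        ((1 : C(Y, Matrix (Fin r) (Fin r) ℂ)).comp h = 1) ∧
        (∀ b₁ b₂ : C(Y, Matrix (Fin r) (Fin r) ℂ),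
          (b₁ * b₂).comp h = b₁.comp h * b₂.comp h) ∧
        (∀ b₁ b₂ : C(Y, Matrix (Fin r) (Fin r) ℂ),
          (b₁ + b₂).comp h = b₁.comp h + b₂.comp h) ∧
        (∀ (μ : ℂ) (b : C(Y, Matrix (Fin r) (Fin r) ℂ)),
          (μ • b).comp h = μ • b.comp h) ∧
        (∀ b : C(Y, Matrix (Fin r) (Fin r) ℂ), (star b).comp h = star (b.comp h)) ∧
        (∀ l : Fin n,
          (⨆ x : X,
            ‖(((a l).comp ⟨Set.inclusion hYX, continuous_inclusion hYX⟩).comp h) x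
              - (a l) x‖) < ε) :=
  exists_interval_subalgebra_approx_general X hX1 hcl ε hε r n a
end

section
/- Let N ≥ 2 be an integer, let ω = exp(2πi/N) viewed as an element of the circle S¹ ⊆ ℂ, and let s ∈ M_N(ℂ) be the cyclic shift matrix (s_{j,k} = 1 if k ≡ j + 1 mod N, else 0, indices 0, …, N−1). Let R = {f ∈ C(S¹, M_N(ℂ)) : f(ω z) = s f(z) s* for all z ∈ S¹}, a closed unital *-subalgebra of C(S¹, M_N(ℂ)). Then R is isomorphic, as a complex *-algebra, to C(S¹, M_N(ℂ)). -/
/-!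
The shift `s` is diagonalised by the discrete Fourier matrix `F`: `s F = F diag(ω^m)`. Hence
`σ(w) = F diag(1, w, …, w^(N-1)) F*` is a continuous unitary representation of the circle with
`σ(ω) = s`, a homomorphic choice of the paper's path `s_λ`. The map
`g ↦ (w ↦ σ(w) g(w^N) σ(w)*)` is then an injective *-homomorphism
`C(S¹, M_N) → C(S¹, M_N)` (as `z ↦ z^N` is onto), and its range is exactly `R`: `f` is in the
range iff `w ↦ σ(w)* f(w) σ(w)` descends along the quotient map `z ↦ z^N`, i.e. (the kernel
being generated by `ω`) iff it is invariant under `w ↦ ω w`, which is the twisted periodicity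
defining `R`. Its inverse on `R` is `Φ`.
-/

open Function

theorem StarAlgHom.exists_inverse_on_range {R B C : Type*} [CommSemiring R] [Semiring B]
    [Algebra R B] [Star B] [Semiring C] [Algebra R C] [Star C] (Ψ : B →⋆ₐ[R] C)
    (hΨ : Injective Ψ) :
    ∃ Φ : C → B, Set.InjOn Φ (Set.range Ψ) ∧ Φ '' Set.range Ψ = Set.univ ∧ Φ 1 = 1 ∧
      (∀ f ∈ Set.range Ψ, ∀ g ∈ Set.range Ψ, Φ (f + g) = Φ f + Φ g) ∧
      (∀ f ∈ Set.range Ψ, ∀ g ∈ Set.range Ψ, Φ (f * g) = Φ f * Φ g) ∧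
      (∀ f ∈ Set.range Ψ, ∀ μ : R, Φ (μ • f) = μ • Φ f) ∧
      (∀ f ∈ Set.range Ψ, Φ (star f) = star (Φ f)) := by
  have hΦ : LeftInverse (invFun Ψ) Ψ := leftInverse_invFun hΨ
  refine ⟨invFun Ψ, hΦ.rightInvOn_range.injOn, ?_, ?_, ?_, ?_, ?_, ?_⟩
  · rw [← Set.range_comp, hΦ.id, Set.range_id]
  · rw [← map_one Ψ, hΦ]
  · rintro _ ⟨f, rfl⟩ _ ⟨g, rfl⟩
    rw [← map_add, hΦ, hΦ, hΦ]
  · rintro _ ⟨f, rfl⟩ _ ⟨g, rfl⟩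
    rw [← map_mul, hΦ, hΦ, hΦ]
  · rintro _ ⟨f, rfl⟩ μ
    rw [← map_smul, hΦ, hΦ]
  · rintro _ ⟨f, rfl⟩
    rw [← map_star, hΦ, hΦ]

theorem apply_zpow_mul_eq {G Z : Type*} [Group G] {φ : G → Z} {ω : G}
    (h : ∀ z, φ (ω * z) = φ z) (k : ℤ) (z : G) : φ (ω ^ k * z) = φ z := by
  induction k using Int.induction_on generalizing z with
  | zero => simp
  | succ n ih => rw [zpow_add_one, mul_assoc, ih, h]
  | pred n ih => rw [zpow_sub_one, mul_assoc, ih, ← h, mul_inv_cancel_left]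

namespace ContinuousMap

variable {X A : Type*} [TopologicalSpace X] [TopologicalSpace A] [Semiring A] [StarRing A]
  [IsTopologicalSemiring A] [ContinuousStar A]

def toUnitary (u : C(X, unitary A)) : unitary C(X, A) :=
  ⟨⟨fun x => u x, continuous_subtype_val.comp u.continuous⟩, by
    rw [Unitary.mem_iff]; constructor <;> ext1 x <;> simp⟩

end ContinuousMap

section TwistedPullback

variable (𝕜 : Type*) {G H A : Type*} [CommSemiring 𝕜] [TopologicalSpace G]
  [TopologicalSpace H] [TopologicalSpace A] [Semiring A] [StarRing A] [IsTopologicalSemiring A]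
  [ContinuousStar A] [Algebra 𝕜 A]

noncomputable def twistedPullback (p : C(G, H)) (σ : C(G, unitary A)) :
    C(H, A) →⋆ₐ[𝕜] C(G, A) :=
  (Unitary.conjStarAlgAut 𝕜 C(G, A) σ.toUnitary).toStarAlgHom.comp
    (ContinuousMap.compStarAlgHom' 𝕜 A p)

@[simp]
lemma twistedPullback_apply (p : C(G, H)) (σ : C(G, unitary A)) (g : C(H, A)) (x : G) :
    twistedPullback 𝕜 p σ g x = σ x * g (p x) * star (σ x : A) := rfl

lemma twistedPullback_eq_iff (p : C(G, H)) (σ : C(G, unitary A)) (g : C(H, A)) (f : C(G, A)) :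
    twistedPullback 𝕜 p σ g = f ↔
      g.comp p = (Unitary.conjStarAlgAut 𝕜 C(G, A) σ.toUnitary).symm f :=
  (StarAlgEquiv.eq_symm_apply (Unitary.conjStarAlgAut 𝕜 C(G, A) σ.toUnitary)).symm

theorem twistedPullback_injective {p : C(G, H)} (hp : Surjective p) (σ : C(G, unitary A)) :
    Injective (twistedPullback 𝕜 p σ) := by
  intro g g' h
  have hcomp : g.comp p = g'.comp p :=
    (Unitary.conjStarAlgAut 𝕜 C(G, A) σ.toUnitary).injective h
  ext y
  obtain ⟨x, rfl⟩ := hp y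
  exact congr($hcomp x)

theorem range_twistedPullback [Group G] [Group H] {p : G →ₜ* H} (hp : Topology.IsQuotientMap p)
    {ω : G} (hker : (p : G →* H).ker = Subgroup.zpowers ω) (σ : G →ₜ* unitary A) :
    Set.range (twistedPullback 𝕜 (p : C(G, H)) (σ : C(G, unitary A))) =
      {f | ∀ z, f (ω * z) = σ ω * f z * star (σ ω : A)} := by
  have hpω : p ω = 1 := MonoidHom.mem_ker.1 (hker ▸ Subgroup.mem_zpowers ω)
  ext f
  constructor
  · rintro ⟨g, rfl⟩ z
    simp [map_mul, hpω, mul_assoc]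
  · intro hf
    set h := (Unitary.conjStarAlgAut 𝕜 C(G, A) (σ : C(G, unitary A)).toUnitary).symm f
    have h_apply (z : G) : h z = star (σ z : A) * f z * σ z := rfl
    have h_invariant (z : G) : h (ω * z) = h z := by
      rw [h_apply, h_apply, hf]
      simp only [map_mul, Submonoid.coe_mul, star_mul, mul_assoc]
      simp only [← mul_assoc (star (σ ω : A)) (σ ω : A), Unitary.coe_star_mul_self, one_mul]
    have h_factors : FactorsThrough h p := by
      intro a b hab
      obtain ⟨k, hk⟩ : ∃ k : ℤ, ω ^ k = a * b⁻¹ := by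
        rw [← Subgroup.mem_zpowers_iff, ← hker, MonoidHom.mem_ker, map_mul, map_inv]
        exact mul_inv_eq_one.2 hab
      rw [← inv_mul_cancel_right a b, ← hk, apply_zpow_mul_eq h_invariant]
    exact ⟨hp.lift h h_factors,
      (twistedPullback_eq_iff 𝕜 _ _ _ _).2 (hp.lift_comp h h_factors)⟩

end TwistedPullback

theorem isPrimitiveRoot_circleExp {N : ℕ} [NeZero N] :
    IsPrimitiveRoot (Circle.exp (2 * Real.pi / N)) N := by
  refine IsPrimitiveRoot.of_map_of_injective (f := Circle.coeHom) ?_ Circle.coe_injective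
  convert Complex.isPrimitiveRoot_exp N (NeZero.ne N) using 1
  change ((Circle.exp _ : Circle) : ℂ) = _
  rw [Circle.coe_exp]
  push_cast
  ring_nf

theorem ker_powMonoidHom_circle {N : ℕ} [NeZero N] {ζ : Circle} (hζ : IsPrimitiveRoot ζ N) :
    (powMonoidHom N : Circle →* Circle).ker = Subgroup.zpowers ζ := by
  ext x
  rw [MonoidHom.mem_ker, powMonoidHom_apply, Subgroup.mem_zpowers_iff]
  constructor
  · intro hx
    obtain ⟨i, -, hi⟩ := (hζ.map_of_injective (f := Circle.coeHom) Circle.coe_injective)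
      |>.eq_pow_of_pow_eq_one (ξ := (x : ℂ)) (by rw [← Circle.coe_pow, hx, Circle.coe_one])
    exact ⟨i, Circle.coe_injective hi⟩
  · rintro ⟨k, rfl⟩
    rw [← zpow_natCast, ← zpow_mul, mul_comm, zpow_mul, zpow_natCast, hζ.pow_eq_one, one_zpow]

theorem geom_sum_eq_zero_of_pow_eq_one {K : Type*} [CommRing K] [IsDomain K] {x : K} {n : ℕ}
    (hx : x ^ n = 1) (hx1 : x ≠ 1) : ∑ i ∈ Finset.range n, x ^ i = 0 :=
  eq_zero_of_ne_zero_of_mul_left_eq_zero (sub_ne_zero_of_ne hx1.symm)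
    (by rw [mul_neg_geom_sum, hx, sub_self])

section FourierMatrix

open Matrix

def cyclicShift (N : ℕ) : Matrix (Fin N) (Fin N) ℂ :=
  of fun j k => if (k : ℕ) = ((j : ℕ) + 1) % N then 1 else 0

noncomputable def fourierMatrix (ζ : Circle) (N : ℕ) : Matrix (Fin N) (Fin N) ℂ :=
  of fun j m => (Real.sqrt N : ℂ)⁻¹ * (ζ ^ ((j : ℕ) * m) : Circle)

noncomputable def diagonalPowers (N : ℕ) :
    Circle →ₜ* unitary (Matrix (Fin N) (Fin N) ℂ) where
  toFun w := ⟨diagonal fun m => ((w ^ (m : ℕ) : Circle) : ℂ), by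
    simp [Unitary.mem_iff, star_eq_conjTranspose, diagonal_conjTranspose, diagonal_mul_diagonal,
      ← Circle.coe_inv_eq_conj]⟩
  map_one' := by ext1; simp
  map_mul' w w' := by ext1; simp [diagonal_mul_diagonal, mul_pow]
  continuous_toFun := by
    refine Continuous.subtype_mk (Continuous.matrix_diagonal ?_) _
    fun_prop

variable {N : ℕ} {ζ : Circle}

noncomputable def conjDiagonalPowers (U : unitary (Matrix (Fin N) (Fin N) ℂ)) :
    Circle →ₜ* unitary (Matrix (Fin N) (Fin N) ℂ) :=
  { (MulAut.conj U).toMonoidHom.comp (diagonalPowers N).toMonoidHom with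
    continuous_toFun := (continuous_const.mul (diagonalPowers N).continuous).mul continuous_const }

theorem star_fourierMatrix_mul_self (hζ : IsPrimitiveRoot ζ N) :
    star (fourierMatrix ζ N) * fourierMatrix ζ N = 1 := by
  ext j k
  set x : Circle := (ζ ^ (j : ℕ))⁻¹ * ζ ^ (k : ℕ) with hx_def
  have hx : x = 1 ↔ j = k := by
    rw [inv_mul_eq_one, Fin.ext_iff]
    exact ⟨fun h => hζ.pow_inj j.isLt k.isLt h, fun h => by rw [h]⟩
  have hxN : (x : ℂ) ^ N = 1 := by
    rw [← Circle.coe_pow, mul_pow, inv_pow, ← pow_mul, ← pow_mul, mul_comm _ N, mul_comm _ N,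
      pow_mul, pow_mul, hζ.pow_eq_one]
    simp
  have hentry (m : Fin N) : star (fourierMatrix ζ N m j) * fourierMatrix ζ N m k =
      (N : ℂ)⁻¹ * (x : ℂ) ^ (m : ℕ) := by
    have hc : star ((Real.sqrt N : ℂ)⁻¹) * (Real.sqrt N : ℂ)⁻¹ = (N : ℂ)⁻¹ := by
      rw [star_inv₀, Complex.star_def, Complex.conj_ofReal, ← mul_inv, ← Complex.ofReal_mul,
        Real.mul_self_sqrt (Nat.cast_nonneg N), Complex.ofReal_natCast]
    have hz : star ((ζ ^ ((m : ℕ) * j) : Circle) : ℂ) * (ζ ^ ((m : ℕ) * k) : Circle) =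
        (x : ℂ) ^ (m : ℕ) := by
      rw [Complex.star_def, ← Circle.coe_inv_eq_conj, ← Circle.coe_mul, ← Circle.coe_pow,
        hx_def, mul_pow, inv_pow, ← pow_mul, ← pow_mul, mul_comm (j : ℕ), mul_comm (k : ℕ)]
    simp only [fourierMatrix, of_apply, star_mul']
    rw [← hc, ← hz]
    ring
  simp only [mul_apply, star_apply, hentry, ← Finset.mul_sum, one_apply]
  rw [Fin.sum_univ_eq_sum_range (fun m => (x : ℂ) ^ m)]
  by_cases hjk : j = k
  · subst hjk
    have hN : (N : ℂ) ≠ 0 := Nat.cast_ne_zero.2 j.pos.ne'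
    simp [show x = 1 from hx.2 rfl, inv_mul_cancel₀ hN]
  · rw [geom_sum_eq_zero_of_pow_eq_one hxN (Circle.coe_eq_one.not.2 (mt hx.1 hjk)), if_neg hjk,
      mul_zero]

theorem fourierMatrix_mem_unitary (hζ : IsPrimitiveRoot ζ N) :
    fourierMatrix ζ N ∈ unitary (Matrix (Fin N) (Fin N) ℂ) :=
  Unitary.mem_iff.2 ⟨star_fourierMatrix_mul_self hζ,
    mul_eq_one_comm.1 (star_fourierMatrix_mul_self hζ)⟩

theorem cyclicShift_mul_fourierMatrix (hζ : IsPrimitiveRoot ζ N) :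
    cyclicShift N * fourierMatrix ζ N =
      fourierMatrix ζ N * diagonal fun m : Fin N => ((ζ ^ (m : ℕ) : Circle) : ℂ) := by
  ext j m
  have hmod : ζ ^ (((j : ℕ) + 1) % N) = ζ ^ ((j : ℕ) + 1) := by
    simpa only [← hζ.eq_orderOf] using pow_mod_orderOf ζ ((j : ℕ) + 1)
  have hpow : (ζ : ℂ) ^ (((j : ℕ) + 1) % N * m) =
      (ζ : ℂ) ^ ((j : ℕ) * m) * (ζ : ℂ) ^ (m : ℕ) := by
    rw [pow_mul, ← Circle.coe_pow, hmod, Circle.coe_pow, ← pow_mul, add_one_mul, pow_add]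
  rw [mul_diagonal, mul_apply, Finset.sum_eq_single ⟨((j : ℕ) + 1) % N, Nat.mod_lt _ j.pos⟩]
  · simp [cyclicShift, fourierMatrix, hpow, mul_assoc]
  · intro l _ hl
    simp [cyclicShift, Fin.ext_iff.not.1 hl]
  · simp

theorem conjDiagonalPowers_fourierMatrix_apply_self (hζ : IsPrimitiveRoot ζ N) :
    (conjDiagonalPowers ⟨fourierMatrix ζ N, fourierMatrix_mem_unitary hζ⟩ ζ :
      Matrix (Fin N) (Fin N) ℂ) = cyclicShift N := by
  change fourierMatrix ζ N * diagonal (fun m : Fin N => ((ζ ^ (m : ℕ) : Circle) : ℂ)) *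
    star (fourierMatrix ζ N) = cyclicShift N
  rw [← cyclicShift_mul_fourierMatrix hζ, mul_assoc,
    mul_eq_one_comm.1 (star_fourierMatrix_mul_self hζ), mul_one]

end FourierMatrix

/-- Let `N ≥ 2`, `ω = exp(2πi/N) ∈ S¹`, `s` the cyclic shift matrix in `M_N(ℂ)`, and
`R = {f ∈ C(S¹, M_N(ℂ)) : f(ωz) = s f(z) s* for all z}`.  Then `R` is isomorphic, as a
complex *-algebra, to `C(S¹, M_N(ℂ))`: there is a map `Φ` which restricts to a bijection
from `R` onto `C(S¹, M_N(ℂ))` preserving the unit, addition, multiplication, scalar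
multiplication and the adjoint. -/
theorem twisted_circle_algebra_iso (N : ℕ) (hN : 2 ≤ N) :
    let ω : Circle := Circle.exp (2 * Real.pi / N)
    let s : Matrix (Fin N) (Fin N) ℂ :=
      Matrix.of fun j k => if (k : ℕ) = ((j : ℕ) + 1) % N then 1 else 0
    let R : Set C(Circle, Matrix (Fin N) (Fin N) ℂ) :=
      {f | ∀ z : Circle, f (ω * z) = s * f z * star s}
    ∃ Φ : C(Circle, Matrix (Fin N) (Fin N) ℂ) → C(Circle, Matrix (Fin N) (Fin N) ℂ),
      Set.InjOn Φ R ∧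
      Φ '' R = Set.univ ∧
      Φ 1 = 1 ∧
      (∀ f ∈ R, ∀ g ∈ R, Φ (f + g) = Φ f + Φ g) ∧
      (∀ f ∈ R, ∀ g ∈ R, Φ (f * g) = Φ f * Φ g) ∧
      (∀ f ∈ R, ∀ μ : ℂ, Φ (μ • f) = μ • Φ f) ∧
      (∀ f ∈ R, Φ (star f) = star (Φ f)) := by
  intro ω s R
  have : NeZero N := ⟨by omega⟩
  have hω : IsPrimitiveRoot ω N := isPrimitiveRoot_circleExp
  let p : Circle →ₜ* Circle := ⟨powMonoidHom N, continuous_pow N⟩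
  have hp : Topology.IsQuotientMap p := (Circle.isQuotientCoveringMap_npow N).toIsQuotientMap
  let σ := conjDiagonalPowers ⟨fourierMatrix ω N, fourierMatrix_mem_unitary hω⟩
  let Ψ := twistedPullback ℂ (p : C(Circle, Circle))
    (σ : C(Circle, unitary (Matrix (Fin N) (Fin N) ℂ)))
  have hR : R = Set.range Ψ := by
    rw [range_twistedPullback ℂ hp (ker_powMonoidHom_circle hω),
      conjDiagonalPowers_fourierMatrix_apply_self hω]
    rfl
  rw [hR]
  exact Ψ.exists_inverse_on_range (twistedPullback_injective ℂ hp.surjective _)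
end

section
/- Let A be a unital C*-algebra, let x ∈ A be positive, and let q ∈ A be a projection such that ‖q x q − q‖ < 1. Then there exists s ∈ A with s* s = q and with s s* belonging to the closed linear span of {x a x : a ∈ A} (the hereditary subalgebra of A generated by x). In particular, q is Murray–von Neumann equivalent to a projection in that hereditary subalgebra. -/
/-!
Put `y = q x q` and `u = 1 - (q - y)`. Since `‖q - y‖ < 1`, `u` is strictly positive; it commutes
with `q` and `u q = y`, so `e = q u^{-1/2}` satisfies `e* x e = u^{-1/2} u u^{-1/2} q = q`.
Then `s = x^{1/2} e` has `s* s = q`, hence is a partial isometry, and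
`s s* = x^{1/2} (e e*) x^{1/2}` is a limit of `x (w e e* w) x`, where `x w_δ → x^{1/2}` for
`w_δ = (max x δ)^{-1/2}` as `δ → 0⁺`.
-/

open Filter Topology CFC

section PartialIsometry

variable {A : Type*} [NonUnitalNormedRing A] [StarRing A] [CStarRing A]

lemma IsStarProjection.mul_star_self_of_star_mul_self {s : A}
    (h : IsStarProjection (star s * s)) : IsStarProjection (s * star s) := by
  set p := star s * s
  have hsp : s * p = s := by
    have hp : p * p = p := h.isIdempotentElem
    rw [← sub_eq_zero, ← CStarRing.star_mul_self_eq_zero_iff, star_sub, star_mul,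
      h.isSelfAdjoint.star_eq]
    calc (p * star s - star s) * (s * p - s) = p * p * p - p * p - p * p + p := by
          simp only [p]; noncomm_ring
      _ = 0 := by simp only [hp]; abel
  refine ⟨?_, .mul_star_self s⟩
  calc s * star s * (s * star s) = s * p * star s := by simp only [p, mul_assoc]
    _ = s * star s := by rw [hsp]

end PartialIsometry

section Corner

variable {A : Type*} [CStarAlgebra A] [PartialOrder A] [StarOrderedRing A]

lemma IsSelfAdjoint.isStrictlyPositive_one_sub {a : A} (ha : IsSelfAdjoint a) (h : ‖a‖ < 1) :
    IsStrictlyPositive (1 - a) := by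
  refine (isStrictlyPositive_algebraMap (sub_pos.2 h)).of_le ?_
  rw [map_sub, map_one]
  exact sub_le_sub_left ha.le_algebraMap_norm_self 1

lemma exists_star_mul_mul_eq_of_norm_mul_mul_sub_lt_one {q x : A} (hq : IsStarProjection q)
    (hx : IsSelfAdjoint x) (h : ‖q * x * q - q‖ < 1) : ∃ e : A, star e * x * e = q := by
  set u := 1 - (q - q * x * q)
  have hqq : q * q = q := hq.isIdempotentElem
  have hu : IsStrictlyPositive u := by
    refine IsSelfAdjoint.isStrictlyPositive_one_sub ?_ (by rwa [norm_sub_rev])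
    exact hq.isSelfAdjoint.sub (by simpa [hq.isSelfAdjoint.star_eq] using hx.conjugate q)
  have huq : u * q = q * x * q := by simp [u, sub_mul, mul_assoc, hqq]
  have hqu : q * u = q * x * q := by simp [u, mul_sub, ← mul_assoc, hqq]
  set w := u ^ (-(1 / 2) : ℝ)
  have hw : IsSelfAdjoint w := rpow_nonneg.isSelfAdjoint
  have hwq : Commute w q := Commute.cfc_nnreal (huq.trans hqu.symm) _
  refine ⟨q * w, ?_⟩
  calc star (q * w) * x * (q * w) = w * (q * x * q) * w := by
        simp only [star_mul, hw.star_eq, hq.isSelfAdjoint.star_eq, mul_assoc]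
    _ = w * u * w * q := by simp only [← huq, mul_assoc, ← hwq.eq]
    _ = q := by rw [conjugate_rpow_neg_one_half u hu, one_mul]

end Corner

section Hereditary

lemma Real.abs_div_sqrt_max_sub_sqrt_le {t δ : ℝ} (ht : 0 ≤ t) (hδ : 0 < δ) :
    |t / √(max t δ) - √t| ≤ √δ := by
  rcases le_total δ t with hδt | htδ
  · rw [max_eq_left hδt, Real.div_sqrt, sub_self, _root_.abs_zero]
    exact Real.sqrt_nonneg δ
  · rw [max_eq_right htδ]
    refine abs_sub_le_of_nonneg_of_le (by positivity) ?_ (Real.sqrt_nonneg t)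
      (Real.sqrt_le_sqrt htδ)
    rw [div_le_iff₀ (Real.sqrt_pos.2 hδ), Real.mul_self_sqrt hδ.le]
    exact htδ

variable {A : Type*} [CStarAlgebra A] [PartialOrder A] [StarOrderedRing A]

lemma norm_mul_cfc_inv_sqrt_max_sub_sqrt_le {x : A} (hx : 0 ≤ x) {δ : ℝ} (hδ : 0 < δ) :
    ‖x * cfc (fun t : ℝ ↦ (√(max t δ))⁻¹) x - sqrt x‖ ≤ √δ := by
  have hcont : Continuous fun t : ℝ ↦ (√(max t δ))⁻¹ :=
    (by fun_prop : Continuous fun t : ℝ ↦ √(max t δ)).inv₀ fun t ↦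
      (Real.sqrt_pos.2 (hδ.trans_le (le_max_right t δ))).ne'
  have : x * cfc (fun t : ℝ ↦ (√(max t δ))⁻¹) x - sqrt x
      = cfc (fun t : ℝ ↦ t * (√(max t δ))⁻¹ - √t) x := by
    rw [cfc_sub (fun t : ℝ ↦ t * (√(max t δ))⁻¹) Real.sqrt x
        (continuous_id.mul hcont).continuousOn,
      cfc_mul (fun t : ℝ ↦ t) _ x continuous_id.continuousOn hcont.continuousOn,
      cfc_id' ℝ x, sqrt_eq_real_sqrt x hx, cfcₙ_eq_cfc]
  rw [this]
  refine norm_cfc_le (Real.sqrt_nonneg δ) fun t ht ↦ ?_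
  rw [Real.norm_eq_abs, ← div_eq_mul_inv]
  exact Real.abs_div_sqrt_max_sub_sqrt_le (spectrum_nonneg_of_nonneg hx ht) hδ

lemma tendsto_mul_cfc_inv_sqrt_max_nhdsGT_zero {x : A} (hx : 0 ≤ x) :
    Tendsto (fun δ : ℝ ↦ x * cfc (fun t : ℝ ↦ (√(max t δ))⁻¹) x) (𝓝[>] 0) (𝓝 (sqrt x)) := by
  rw [tendsto_iff_norm_sub_tendsto_zero]
  refine squeeze_zero' (.of_forall fun _ ↦ norm_nonneg _)
    (eventually_nhdsWithin_of_forall fun δ hδ ↦ norm_mul_cfc_inv_sqrt_max_sub_sqrt_le hx hδ) ?_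
  exact (Real.continuous_sqrt.tendsto' 0 0 Real.sqrt_zero).mono_left nhdsWithin_le_nhds

lemma sqrt_mul_mul_sqrt_mem_closure_span {x : A} (hx : 0 ≤ x) (c : A) :
    sqrt x * c * sqrt x ∈
      closure (Submodule.span ℂ {y : A | ∃ a : A, y = x * a * x} : Set A) := by
  have hlim := tendsto_mul_cfc_inv_sqrt_max_nhdsGT_zero hx
  refine mem_closure_of_tendsto ((hlim.mul tendsto_const_nhds).mul hlim) (.of_forall fun δ ↦ ?_)
  set w := cfc (fun t : ℝ ↦ (√(max t δ))⁻¹) x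
  have hwx : w * x = x * w := (Commute.refl x).cfc_real _
  refine Submodule.subset_span ⟨w * c * w, ?_⟩
  simp only [mul_assoc, hwx]

end Hereditary

/-- Let `A` be a unital C*-algebra, `x ∈ A` positive, and `q ∈ A` a projection with
`‖q x q − q‖ < 1`.  Then there is `s ∈ A` with `s* s = q` such that `s s*` is a projection
lying in the hereditary subalgebra of `A` generated by `x`, i.e. the closed linear span of
`{x a x : a ∈ A}`; in particular `q` is Murray–von Neumann equivalent to a projection in
that hereditary subalgebra. -/
theorem projection_mvN_into_hereditary
    {A : Type*} [NormedRing A] [StarRing A] [CStarRing A] [CompleteSpace A]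
    [NormedAlgebra ℂ A] [StarModule ℂ A] [PartialOrder A] [StarOrderedRing A]
    (x : A) (hx : 0 ≤ x) (q : A) (hq_sa : IsSelfAdjoint q) (hq_idem : q * q = q)
    (h : ‖q * x * q - q‖ < 1) :
    ∃ s : A, star s * s = q ∧
      IsSelfAdjoint (s * star s) ∧ (s * star s) * (s * star s) = s * star s ∧
      s * star s ∈ closure (Submodule.span ℂ {y : A | ∃ a : A, y = x * a * x} : Set A) := by
  let : CStarAlgebra A := { }
  obtain ⟨e, he⟩ := exists_star_mul_mul_eq_of_norm_mul_mul_sub_lt_one ⟨hq_idem, hq_sa⟩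
    hx.isSelfAdjoint h
  have hsqrt : star (sqrt x) = sqrt x := sqrt_nonneg x |>.isSelfAdjoint.star_eq
  set s := sqrt x * e
  have hs : star s * s = q := by
    rw [star_mul, hsqrt, mul_assoc, ← mul_assoc (sqrt x), sqrt_mul_sqrt_self x hx,
      ← mul_assoc, he]
  have hss : IsStarProjection (s * star s) :=
    IsStarProjection.mul_star_self_of_star_mul_self (hs ▸ ⟨hq_idem, hq_sa⟩)
  refine ⟨s, hs, hss.isSelfAdjoint, hss.isIdempotentElem, ?_⟩
  simpa only [s, star_mul, hsqrt, mul_assoc] using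
    sqrt_mul_mul_sqrt_mem_closure_span hx (e * star e)
end
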